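/- arXiv:2307.05062 — 7 statements merged into one kernel-verified Lean document; each statement's English description precedes it below -/
import Mathlib

section
/- Let K be a consistent belief set and let (𝕊_i, 𝕊) be a two level system of spheres centred on ‖K‖. Then the induced system of spheres-based two level CL revision operator ⊙ satisfies, for all sentences α, β: weak relative success (α ∈ K⊙α or K⊙α ⊆ K), closure (K⊙α = Cn(K⊙α)), inclusion (K⊙α ⊆ K + α), consistency preservation (if K is consistent then K⊙α is consistent), vacuity (if ¬α ∉ K then K + α ⊆ K⊙α), extensionality (if ⊢ α ↔ β then K⊙α = K⊙β), strict improvement (if α ∈ K⊙α and ⊢ α → β then β ∈ K⊙β), N-persistence (if ¬β ∈ K⊙β then ¬β ∈ K⊙α for all α), N-recovery (K ⊆ (K⊙α) + ¬α), disjunctive overlap (K⊙α ∩ K⊙β ⊆ K⊙(α ∨ β)) and disjunctive inclusion (if ¬α ∉ K⊙(α ∨ β) then K⊙(α ∨ β) ⊆ K⊙α). -/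
/-- A propositional language `L`: a type of sentences closed under the
truth-functional connectives, together with a consequence operator `Cn`
satisfying inclusion, monotony, iteration, supraclassicality, compactness
and deduction. Supraclassicality is expressed via Boolean valuations that
respect the connectives. -/
structure PropLanguage where
  Sentence : Type
  falsum : Sentence
  neg : Sentence → Sentence
  conj : Sentence → Sentence → Sentence
  disj : Sentence → Sentence → Sentence
  impl : Sentence → Sentence → Sentence
  biimpl : Sentence → Sentence → Sentence
  Cn : Set Sentence → Set Sentence
  cn_inclusion : ∀ A : Set Sentence, A ⊆ Cn A
  cn_monotony : ∀ A B : Set Sentence, A ⊆ B → Cn A ⊆ Cn B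
  cn_iteration : ∀ A : Set Sentence, Cn (Cn A) = Cn A
  cn_supraclassical : ∀ (A : Set Sentence) (α : Sentence),
    (∀ v : Sentence → Bool,
        v falsum = false →
        (∀ β, v (neg β) = !v β) →
        (∀ β γ, v (conj β γ) = (v β && v γ)) →
        (∀ β γ, v (disj β γ) = (v β || v γ)) →
        (∀ β γ, v (impl β γ) = (!v β || v γ)) →
        (∀ β γ, v (biimpl β γ) = (v β == v γ)) →
        (∀ β ∈ A, v β = true) → v α = true) →
    α ∈ Cn A
  cn_compact : ∀ (A : Set Sentence) (α : Sentence), α ∈ Cn A →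
    ∃ A' : Set Sentence, A' ⊆ A ∧ A'.Finite ∧ α ∈ Cn A'
  cn_deduction : ∀ (A : Set Sentence) (α β : Sentence),
    β ∈ Cn (A ∪ {α}) ↔ impl α β ∈ Cn A

namespace PropLanguage

variable (L : PropLanguage)

/-- A set of sentences is consistent iff it does not entail falsum. -/
def Consistent (A : Set L.Sentence) : Prop := L.falsum ∉ L.Cn A

/-- A belief set: a logically closed set of sentences. -/
def IsBeliefSet (K : Set L.Sentence) : Prop := K = L.Cn K

/-- Expansion: `K + α = Cn (K ∪ {α})`. -/
def expand (K : Set L.Sentence) (α : L.Sentence) : Set L.Sentence :=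
  L.Cn (K ∪ {α})

/-- A possible world: a maximal consistent set of sentences. -/
def IsWorld (M : Set L.Sentence) : Prop :=
  L.Consistent M ∧ ∀ M' : Set L.Sentence, L.Consistent M' → M ⊆ M' → M' = M

/-- `‖R‖`: the set of possible worlds containing `R`. -/
def worldsOf (R : Set L.Sentence) : Set (Set L.Sentence) :=
  {M | L.IsWorld M ∧ R ⊆ M}

/-- `‖α‖`: the set of possible worlds containing `Cn {α}`. -/
def wS (α : L.Sentence) : Set (Set L.Sentence) := L.worldsOf (L.Cn {α})

/-- `⋂ X`: the set of sentences belonging to every world in `X`. -/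
def th (X : Set (Set L.Sentence)) : Set L.Sentence := {φ | ∀ M ∈ X, φ ∈ M}

/-! ### Postulates for an operator `od` on a belief set `K` -/

/-- Weak relative success: `α ∈ K⊙α` or `K⊙α ⊆ K`. -/
def WeakRelativeSuccess (K : Set L.Sentence) (od : L.Sentence → Set L.Sentence) : Prop :=
  ∀ α, α ∈ od α ∨ od α ⊆ K

/-- Closure: `K⊙α = Cn (K⊙α)`. -/
def Closure (od : L.Sentence → Set L.Sentence) : Prop :=
  ∀ α, od α = L.Cn (od α)

/-- Inclusion: `K⊙α ⊆ K + α`. -/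
def Inclusion (K : Set L.Sentence) (od : L.Sentence → Set L.Sentence) : Prop :=
  ∀ α, od α ⊆ L.expand K α

/-- Consistency preservation: if `K` is consistent then `K⊙α` is consistent. -/
def ConsistencyPreservation (K : Set L.Sentence) (od : L.Sentence → Set L.Sentence) : Prop :=
  L.Consistent K → ∀ α, L.Consistent (od α)

/-- Vacuity: if `¬α ∉ K` then `K + α ⊆ K⊙α`. -/
def Vacuity (K : Set L.Sentence) (od : L.Sentence → Set L.Sentence) : Prop :=
  ∀ α, L.neg α ∉ K → L.expand K α ⊆ od α

/-- Weak vacuity: if `¬α ∉ K` then `K ⊆ K⊙α`. -/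
def WeakVacuity (K : Set L.Sentence) (od : L.Sentence → Set L.Sentence) : Prop :=
  ∀ α, L.neg α ∉ K → K ⊆ od α

/-- Extensionality: if `⊢ α ↔ β` then `K⊙α = K⊙β`. -/
def Extensionality (od : L.Sentence → Set L.Sentence) : Prop :=
  ∀ α β, L.biimpl α β ∈ L.Cn ∅ → od α = od β

/-- Strict improvement: if `α ∈ K⊙α` and `⊢ α → β` then `β ∈ K⊙β`. -/
def StrictImprovement (od : L.Sentence → Set L.Sentence) : Prop :=
  ∀ α β, α ∈ od α → L.impl α β ∈ L.Cn ∅ → β ∈ od β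

/-- N-persistence: if `¬β ∈ K⊙β` then `¬β ∈ K⊙α` for all `α`. -/
def NPersistence (od : L.Sentence → Set L.Sentence) : Prop :=
  ∀ α β, L.neg β ∈ od β → L.neg β ∈ od α

/-- N-recovery: `K ⊆ (K⊙α) + ¬α`. -/
def NRecovery (K : Set L.Sentence) (od : L.Sentence → Set L.Sentence) : Prop :=
  ∀ α, K ⊆ L.expand (od α) (L.neg α)

/-- Disjunctive overlap: `K⊙α ∩ K⊙β ⊆ K⊙(α ∨ β)`. -/
def DisjunctiveOverlap (od : L.Sentence → Set L.Sentence) : Prop :=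
  ∀ α β, od α ∩ od β ⊆ od (L.disj α β)

/-- Disjunctive inclusion: if `¬α ∉ K⊙(α ∨ β)` then `K⊙(α ∨ β) ⊆ K⊙α`. -/
def DisjunctiveInclusion (od : L.Sentence → Set L.Sentence) : Prop :=
  ∀ α β, L.neg α ∉ od (L.disj α β) → od (L.disj α β) ⊆ od α

/-- Weak disjunctive inclusion: if `¬α ∉ K⊙(α ∨ β)` then
`(K⊙(α ∨ β)) + (α ∨ β) ⊆ (K⊙α) + α`. -/
def WeakDisjunctiveInclusion (od : L.Sentence → Set L.Sentence) : Prop :=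
  ∀ α β, L.neg α ∉ od (L.disj α β) →
    L.expand (od (L.disj α β)) (L.disj α β) ⊆ L.expand (od α) α

/-! ### AGM revision and two level credibility-limited revision -/

/-- An AGM revision on `K`: postulates (⋆1)–(⋆8). -/
def IsAGMRevision (K : Set L.Sentence) (star : L.Sentence → Set L.Sentence) : Prop :=
  (∀ α, star α = L.Cn (star α)) ∧
  (∀ α, α ∈ star α) ∧
  (∀ α, star α ⊆ L.expand K α) ∧
  (∀ α, L.neg α ∉ K → L.expand K α ⊆ star α) ∧
  (∀ α, L.Consistent {α} → L.Consistent (star α)) ∧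
  (∀ α β, L.biimpl α β ∈ L.Cn ∅ → star α = star β) ∧
  (∀ α β, star α ∩ star β ⊆ star (L.disj α β)) ∧
  (∀ α β, L.neg α ∉ star (L.disj α β) → star (L.disj α β) ⊆ star α)

/-- `od` is the two level CL revision operator induced by `star`, `CH`, `CL`:
`K⊙α = K⋆α` if `α ∈ C_H`; `K⊙α = (K⋆α) ∩ K` if `α ∈ C_L`;
`K⊙α = K` if `α ∉ C_H ∪ C_L`. -/
def IsTwoLevelCL (K : Set L.Sentence) (od star : L.Sentence → Set L.Sentence)
    (CH CL : Set L.Sentence) : Prop :=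
  ∀ α, (α ∈ CH → od α = star α) ∧ (α ∈ CL → od α = star α ∩ K) ∧
    (α ∉ CH ∪ CL → od α = K)

/-- Credibility of logical equivalents. -/
def CredLogEquiv (C : Set L.Sentence) : Prop :=
  ∀ α β, L.biimpl α β ∈ L.Cn ∅ → (α ∈ C ↔ β ∈ C)

/-- Single sentence closure. -/
def SingleSentenceClosure (C : Set L.Sentence) : Prop :=
  ∀ α ∈ C, L.Cn {α} ⊆ C

/-- Element consistency. -/
def ElementConsistency (C : Set L.Sentence) : Prop :=
  ∀ α ∈ C, L.Consistent {α}

/-- Credibility lower bounding (w.r.t. `K`). -/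
def CredLowerBound (K C : Set L.Sentence) : Prop :=
  L.Consistent K → K ⊆ C

/-- Condition (C - ⋆): if `α ∉ C` and `β ∈ C` then `¬α ∈ K⋆β`. -/
def CondCStar (K : Set L.Sentence) (star : L.Sentence → Set L.Sentence)
    (C : Set L.Sentence) : Prop :=
  ∀ α β, α ∉ C → β ∈ C → L.neg α ∈ star β

/-! ### Two level systems of spheres -/

/-- `(Si, S)` is a two level system of spheres centred on `‖K‖`. -/
def IsTwoLevelSystem (K : Set L.Sentence)
    (Si S : Set (Set (Set L.Sentence))) : Prop :=
  (∀ X ∈ S, ∀ M ∈ X, L.IsWorld M) ∧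
  (∀ U ∈ S, ∀ V ∈ S, U ⊆ V ∨ V ⊆ U) ∧
  (∀ U ∈ Si, ∀ V ∈ Si, U ⊆ V ∨ V ⊆ U) ∧
  L.worldsOf K ∈ S ∧ (∀ U ∈ S, L.worldsOf K ⊆ U) ∧
  L.worldsOf K ∈ Si ∧ (∀ U ∈ Si, L.worldsOf K ⊆ U) ∧
  (∀ α, (∃ U ∈ S, (U ∩ L.wS α).Nonempty) →
    ∃ U ∈ S, (U ∩ L.wS α).Nonempty ∧ ∀ V ∈ S, (V ∩ L.wS α).Nonempty → U ⊆ V) ∧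
  (∀ α, (∃ U ∈ Si, (U ∩ L.wS α).Nonempty) →
    ∃ U ∈ Si, (U ∩ L.wS α).Nonempty ∧ ∀ V ∈ Si, (V ∩ L.wS α).Nonempty → U ⊆ V) ∧
  Si ⊆ S ∧
  (∀ X ∈ Si, ∀ Y ∈ S, Y ∉ Si → X ⊆ Y)

/-- `od` is the system of spheres-based two level CL revision operator induced
by `(Si, S)` (centred on `‖K‖`): if `S_α` (the smallest sphere of `S` meeting
`‖α‖`) is in `Si` then `K⊙α = ⋂(S_α ∩ ‖α‖)`; if `S_α ∈ S \ Si` then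
`K⊙α = ⋂(‖K‖ ∪ (S_α ∩ ‖α‖))`; and if no sphere of `S` meets `‖α‖` then
`K⊙α = K`. -/
def IsSphereRevision (K : Set L.Sentence)
    (Si S : Set (Set (Set L.Sentence)))
    (od : L.Sentence → Set L.Sentence) : Prop :=
  ∀ α,
    (∀ Sa ∈ S, (Sa ∩ L.wS α).Nonempty →
      (∀ V ∈ S, (V ∩ L.wS α).Nonempty → Sa ⊆ V) →
      (Sa ∈ Si → od α = L.th (Sa ∩ L.wS α)) ∧
      (Sa ∉ Si → od α = L.th (L.worldsOf K ∪ (Sa ∩ L.wS α)))) ∧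
    ((∀ X ∈ S, X ∩ L.wS α = ∅) → od α = K)

end PropLanguage

namespace PropLanguage

variable {L : PropLanguage}

lemma world_closed {M : Set L.Sentence} (hM : L.IsWorld M) : L.Cn M = M := by
  apply hM.2
  · show L.falsum ∉ L.Cn (L.Cn M)
    rw [L.cn_iteration]
    exact hM.1
  · exact L.cn_inclusion M

lemma cn_subset_world {A M : Set L.Sentence} (hM : L.IsWorld M) (h : A ⊆ M) :
    L.Cn A ⊆ M := by
  have := L.cn_monotony A M h
  rwa [world_closed hM] at this

lemma consistent_of_subset_world {A M : Set L.Sentence} (hM : L.IsWorld M) (h : A ⊆ M) :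
    L.Consistent A := fun hf => hM.1 (L.cn_inclusion M (cn_subset_world hM h hf))

lemma world_elim {M : Set L.Sentence} (hM : L.IsWorld M)
    (h : ∀ v : L.Sentence → Bool, v L.falsum = false → (∀ β, v (L.neg β) = !v β) →
      (∀ β γ, v (L.conj β γ) = (v β && v γ)) → (∀ β γ, v (L.disj β γ) = (v β || v γ)) →
      (∀ β γ, v (L.impl β γ) = (!v β || v γ)) → (∀ β γ, v (L.biimpl β γ) = (v β == v γ)) →
      (∀ β ∈ M, v β = true) → False) : False := by
  apply hM.1
  exact L.cn_supraclassical M L.falsum fun v h1 h2 h3 h4 h5 h6 h7 =>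
    (h v h1 h2 h3 h4 h5 h6 h7).elim

lemma world_not_both {M : Set L.Sentence} (hM : L.IsWorld M) {β : L.Sentence}
    (h1 : β ∈ M) (h2 : L.neg β ∈ M) : False := by
  apply world_elim hM
  intro v _ hn _ _ _ _ hall
  have e1 := hall β h1
  have e2 := hall _ h2
  rw [hn, e1] at e2
  simp at e2

lemma world_neg_of_notMem {M : Set L.Sentence} (hM : L.IsWorld M) {β : L.Sentence}
    (h : β ∉ M) : L.neg β ∈ M := by
  by_contra h2
  have key : ∀ γ : L.Sentence, γ ∉ M → L.impl γ L.falsum ∈ M := by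
    intro γ hγ
    have hni : ¬ L.Consistent (L.Cn (M ∪ {γ})) := by
      intro hcons
      have heq := hM.2 _ hcons ((Set.subset_union_left).trans (L.cn_inclusion _))
      exact hγ (heq ▸ L.cn_inclusion _ (Set.mem_union_right M rfl))
    have hf : L.falsum ∈ L.Cn (M ∪ {γ}) := by
      by_contra hc
      apply hni
      show L.falsum ∉ L.Cn (L.Cn (M ∪ {γ}))
      rwa [L.cn_iteration]
    have := (L.cn_deduction M γ L.falsum).mp hf
    rwa [world_closed hM] at this
  have k1 := key β h
  have k2 := key (L.neg β) h2
  apply world_elim hM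
  intro v hf hn _ _ hi _ hall
  have e1 := hall _ k1
  have e2 := hall _ k2
  rw [hi, hf] at e1 e2
  rw [hn] at e2
  cases hc : v β <;> simp [hc] at e1 e2

lemma lindenbaum {A : Set L.Sentence} (hA : L.Consistent A) :
    ∃ M, L.IsWorld M ∧ A ⊆ M := by
  have zorn := zorn_subset_nonempty {B | A ⊆ B ∧ L.Consistent B} ?_ A ⟨subset_rfl, hA⟩
  · obtain ⟨m, hAm, hmax⟩ := zorn
    refine ⟨m, ⟨hmax.1.2, ?_⟩, hAm⟩
    intro M' hcons hsub
    exact Set.Subset.antisymm (hmax.2 ⟨hAm.trans hsub, hcons⟩ hsub) hsub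
  · intro c hcS hchain hcne
    refine ⟨⋃₀ c, ⟨?_, ?_⟩, fun s hs => Set.subset_sUnion_of_mem hs⟩
    · obtain ⟨B, hB⟩ := hcne
      exact (hcS hB).1.trans (Set.subset_sUnion_of_mem hB)
    · intro hf
      obtain ⟨A', hA'sub, hA'fin, hA'f⟩ := L.cn_compact _ _ hf
      obtain ⟨B, hBc, hsub⟩ := DirectedOn.exists_mem_subset_of_finset_subset_biUnion hcne
        hchain.directedOn (s := hA'fin.toFinset)
        (by rwa [Set.Finite.coe_toFinset, ← Set.sUnion_eq_biUnion])
      rw [Set.Finite.coe_toFinset] at hsub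
      exact (hcS hBc).2 (L.cn_monotony _ _ hsub hA'f)

lemma mem_cn_of_impl_falsum {A : Set L.Sentence} {γ : L.Sentence}
    (h : L.impl (L.neg γ) L.falsum ∈ L.Cn A) : γ ∈ L.Cn A := by
  have hx : γ ∈ L.Cn (L.Cn A) := by
    apply L.cn_supraclassical
    intro v hf hn _ _ hi _ hall
    have e := hall _ h
    rw [hi, hn, hf] at e
    cases hc : v γ
    · rw [hc] at e; simp at e
    · rfl
  rwa [L.cn_iteration] at hx

lemma cn_eq_th_worldsOf (A : Set L.Sentence) : L.Cn A = L.th (L.worldsOf A) := by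
  ext γ
  constructor
  · intro hγ M hMw
    exact cn_subset_world hMw.1 hMw.2 hγ
  · intro hγ
    by_contra hnc
    have hcons : L.Consistent (A ∪ {L.neg γ}) := by
      intro hf
      exact hnc (mem_cn_of_impl_falsum ((L.cn_deduction A (L.neg γ) L.falsum).mp hf))
    obtain ⟨M, hMw, hMs⟩ := lindenbaum hcons
    have hγM : γ ∈ M := hγ M ⟨hMw, (Set.subset_union_left).trans hMs⟩
    exact world_not_both hMw hγM (hMs (Set.mem_union_right A rfl))

lemma th_antitone {X Y : Set (Set L.Sentence)} (h : X ⊆ Y) : L.th Y ⊆ L.th X :=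
  fun _ hφ M hM => hφ M (h hM)

lemma th_closed {X : Set (Set L.Sentence)} (hX : ∀ M ∈ X, L.IsWorld M) :
    L.Cn (L.th X) = L.th X := by
  apply Set.Subset.antisymm
  · intro φ hφ M hM
    exact cn_subset_world (hX M hM) (fun ψ (hψ : ψ ∈ L.th X) => hψ M hM) hφ
  · exact L.cn_inclusion _

lemma mem_wS_iff {M : Set L.Sentence} (hM : L.IsWorld M) {α : L.Sentence} :
    M ∈ L.wS α ↔ α ∈ M := by
  constructor
  · intro h; exact h.2 (L.cn_inclusion _ rfl)
  · intro h; exact ⟨hM, cn_subset_world hM (Set.singleton_subset_iff.mpr h)⟩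

lemma worldsOf_union_singleton (A : Set L.Sentence) (α : L.Sentence) :
    L.worldsOf (A ∪ {α}) = L.worldsOf A ∩ L.wS α := by
  ext M
  constructor
  · intro h
    exact ⟨⟨h.1, (Set.subset_union_left).trans h.2⟩,
      (mem_wS_iff h.1).mpr (h.2 (Set.mem_union_right A rfl))⟩
  · intro h
    exact ⟨h.1.1, Set.union_subset h.1.2
      (Set.singleton_subset_iff.mpr ((mem_wS_iff h.1.1).mp h.2))⟩

lemma expand_eq_th (A : Set L.Sentence) (α : L.Sentence) :
    L.expand A α = L.th (L.worldsOf A ∩ L.wS α) := by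
  show L.Cn (A ∪ {α}) = _
  rw [cn_eq_th_worldsOf, worldsOf_union_singleton]

lemma world_disj_iff {M : Set L.Sentence} (hM : L.IsWorld M) {α β : L.Sentence} :
    L.disj α β ∈ M ↔ α ∈ M ∨ β ∈ M := by
  constructor
  · intro h
    by_contra hc
    push_neg at hc
    have hnα := world_neg_of_notMem hM hc.1
    have hnβ := world_neg_of_notMem hM hc.2
    apply world_elim hM
    intro v _ hn _ hd _ _ hall
    have e := hall _ h
    have e1 := hall _ hnα
    have e2 := hall _ hnβ
    rw [hd] at e
    rw [hn] at e1 e2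
    cases h1 : v α <;> cases h2 : v β <;> simp [h1, h2] at e e1 e2
  · intro h
    have hc : L.disj α β ∈ L.Cn M := by
      apply L.cn_supraclassical
      intro v _ _ _ hd _ _ hall
      rw [hd]
      rcases h with h | h
      · rw [hall _ h]; simp
      · rw [hall _ h]; simp
    rwa [world_closed hM] at hc

lemma world_impl_mp {M : Set L.Sentence} (hM : L.IsWorld M) {α β : L.Sentence}
    (h : L.impl α β ∈ M) (hα : α ∈ M) : β ∈ M := by
  by_contra hc
  have hnβ := world_neg_of_notMem hM hc
  apply world_elim hM
  intro v _ hn _ _ hi _ hall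
  have e := hall _ h
  have e1 := hall _ hα
  have e2 := hall _ hnβ
  rw [hi, e1] at e
  rw [hn] at e2
  cases hb : v β <;> simp [hb] at e e2

lemma wS_mono {α β : L.Sentence} (h : L.impl α β ∈ L.Cn ∅) : L.wS α ⊆ L.wS β := by
  intro M hM
  have hW : L.IsWorld M := hM.1
  have himp : L.impl α β ∈ M := cn_subset_world hW (Set.empty_subset M) h
  exact (mem_wS_iff hW).mpr (world_impl_mp hW himp ((mem_wS_iff hW).mp hM))

lemma world_biimpl_iff {M : Set L.Sentence} (hM : L.IsWorld M) {α β : L.Sentence}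
    (h : L.biimpl α β ∈ M) : (α ∈ M ↔ β ∈ M) := by
  constructor
  · intro hα
    by_contra hc
    have hnβ := world_neg_of_notMem hM hc
    apply world_elim hM
    intro v _ hn _ _ _ hb hall
    have e := hall _ h
    have e1 := hall _ hα
    have e2 := hall _ hnβ
    rw [hb, e1] at e
    rw [hn] at e2
    cases hx : v β <;> simp [hx] at e e2
  · intro hβ
    by_contra hc
    have hnα := world_neg_of_notMem hM hc
    apply world_elim hM
    intro v _ hn _ _ _ hb hall
    have e := hall _ h
    have e1 := hall _ hβ
    have e2 := hall _ hnα
    rw [hb, e1] at e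
    rw [hn] at e2
    cases hx : v α <;> simp [hx] at e e2

lemma wS_eq_of_biimpl {α β : L.Sentence} (h : L.biimpl α β ∈ L.Cn ∅) :
    L.wS α = L.wS β := by
  ext M
  constructor
  · intro hm
    have hW : L.IsWorld M := hm.1
    have hb := cn_subset_world hW (Set.empty_subset M) h
    exact (mem_wS_iff hW).mpr ((world_biimpl_iff hW hb).mp ((mem_wS_iff hW).mp hm))
  · intro hm
    have hW : L.IsWorld M := hm.1
    have hb := cn_subset_world hW (Set.empty_subset M) h
    exact (mem_wS_iff hW).mpr ((world_biimpl_iff hW hb).mpr ((mem_wS_iff hW).mp hm))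

lemma wS_disj (α β : L.Sentence) : L.wS (L.disj α β) = L.wS α ∪ L.wS β := by
  ext M
  constructor
  · intro hm
    have hW : L.IsWorld M := hm.1
    rcases (world_disj_iff hW).mp ((mem_wS_iff hW).mp hm) with h | h
    · exact Or.inl ((mem_wS_iff hW).mpr h)
    · exact Or.inr ((mem_wS_iff hW).mpr h)
  · intro hm
    rcases hm with h | h
    · exact (mem_wS_iff h.1).mpr ((world_disj_iff h.1).mpr (Or.inl ((mem_wS_iff h.1).mp h)))
    · exact (mem_wS_iff h.1).mpr ((world_disj_iff h.1).mpr (Or.inr ((mem_wS_iff h.1).mp h)))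

lemma impl_neg_mem_cn_left (α γ : L.Sentence) : L.impl (L.neg α) γ ∈ L.Cn {α} := by
  apply L.cn_supraclassical
  intro v _ hn _ _ hi _ hall
  rw [hi, hn, hall α rfl]
  simp

lemma impl_neg_mem_cn_right (α γ : L.Sentence) : L.impl (L.neg α) γ ∈ L.Cn {γ} := by
  apply L.cn_supraclassical
  intro v _ _ _ _ hi _ hall
  rw [hi, hall γ rfl]
  simp

end PropLanguage

open PropLanguage in
/-- a system of spheres-based two level CL revision operator
induced by a two level system of spheres centred on `‖K‖` satisfies the
eleven listed postulates. -/
theorem sphere_twoLevelCL_satisfies_postulates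
    (L : PropLanguage) (K : Set L.Sentence)
    (hK : L.IsBeliefSet K) (hKcons : L.Consistent K)
    (Si S : Set (Set (Set L.Sentence)))
    (hsys : L.IsTwoLevelSystem K Si S)
    (od : L.Sentence → Set L.Sentence)
    (hod : L.IsSphereRevision K Si S od) :
    L.WeakRelativeSuccess K od ∧ L.Closure od ∧ L.Inclusion K od ∧
    L.ConsistencyPreservation K od ∧ L.Vacuity K od ∧ L.Extensionality od ∧
    L.StrictImprovement od ∧ L.NPersistence od ∧ L.NRecovery K od ∧
    L.DisjunctiveOverlap od ∧ L.DisjunctiveInclusion od := by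
  obtain ⟨hWorlds, hchainS, hchainSi, hKS, hKsubS, hKSi, hKsubSi, hlimS, hlimSi, hSiS, hlast⟩ :=
    hsys
  have hKth : K = L.th (L.worldsOf K) := by
    rw [← cn_eq_th_worldsOf]; exact hK
  have hKne : (L.worldsOf K).Nonempty := by
    obtain ⟨M, hMw, hMs⟩ := lindenbaum hKcons
    exact ⟨M, hMw, hMs⟩
  -- master case analysis on each input sentence
  have hcase : ∀ α : L.Sentence,
      (od α = K ∧ ∀ X ∈ S, X ∩ L.wS α = ∅) ∨
      ∃ Sa ∈ S, (Sa ∩ L.wS α).Nonempty ∧ (∀ V ∈ S, (V ∩ L.wS α).Nonempty → Sa ⊆ V) ∧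
        ((Sa ∈ Si ∧ od α = L.th (Sa ∩ L.wS α)) ∨
         (Sa ∉ Si ∧ od α = L.th (L.worldsOf K ∪ (Sa ∩ L.wS α)))) := by
    intro α
    by_cases h : ∃ U ∈ S, (U ∩ L.wS α).Nonempty
    · obtain ⟨Sa, hSaS, hSane, hSamin⟩ := hlimS α h
      right
      refine ⟨Sa, hSaS, hSane, hSamin, ?_⟩
      have hod' := (hod α).1 Sa hSaS hSane hSamin
      by_cases hSi : Sa ∈ Si
      · exact Or.inl ⟨hSi, hod'.1 hSi⟩
      · exact Or.inr ⟨hSi, hod'.2 hSi⟩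
    · left
      push_neg at h
      exact ⟨(hod α).2 h, h⟩
  -- vacuity-style helper
  have vac : ∀ α, (L.worldsOf K ∩ L.wS α).Nonempty →
      od α = L.th (L.worldsOf K ∩ L.wS α) := by
    intro α hne
    rcases hcase α with ⟨he, hempt⟩ | ⟨Sa, hSaS, hSane, hmin, hbr⟩
    · exact absurd (hempt _ hKS) (Set.nonempty_iff_ne_empty.mp hne)
    have hSaK : Sa = L.worldsOf K :=
      Set.Subset.antisymm (hmin _ hKS hne) (hKsubS Sa hSaS)
    rcases hbr with ⟨hSi, he⟩ | ⟨hSi, he⟩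
    · rw [he, hSaK]
    · rw [hSaK] at hSi
      exact absurd hKSi hSi
  have post1 : L.WeakRelativeSuccess K od := by
    intro α
    rcases hcase α with ⟨he, _⟩ | ⟨Sa, hSaS, hne, hmin, hbr⟩
    · right; rw [he]
    rcases hbr with ⟨hSi, he⟩ | ⟨hSi, he⟩
    · left; rw [he]
      intro M hM
      exact (mem_wS_iff (hWorlds Sa hSaS M hM.1)).mp hM.2
    · right
      rw [he]
      conv_rhs => rw [hKth]
      exact th_antitone Set.subset_union_left
  have post2 : L.Closure od := by
    intro α
    rcases hcase α with ⟨he, _⟩ | ⟨Sa, hSaS, hne, hmin, hbr⟩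
    · rw [he]; exact hK
    rcases hbr with ⟨hSi, he⟩ | ⟨hSi, he⟩
    · rw [he]
      exact (th_closed (fun M hM => hWorlds Sa hSaS M hM.1)).symm
    · rw [he]
      refine (th_closed ?_).symm
      rintro M (hM | hM)
      · exact hM.1
      · exact hWorlds Sa hSaS M hM.1
  have post3 : L.Inclusion K od := by
    intro α
    rw [expand_eq_th]
    rcases hcase α with ⟨he, _⟩ | ⟨Sa, hSaS, hne, hmin, hbr⟩
    · rw [he]
      conv_lhs => rw [hKth]
      exact th_antitone Set.inter_subset_left
    rcases hbr with ⟨hSi, he⟩ | ⟨hSi, he⟩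
    · rw [he]
      exact th_antitone (fun M hM => ⟨hKsubS Sa hSaS hM.1, hM.2⟩)
    · rw [he]
      exact th_antitone ((Set.inter_subset_left).trans Set.subset_union_left)
  have post4 : L.ConsistencyPreservation K od := by
    intro _ α
    rcases hcase α with ⟨he, _⟩ | ⟨Sa, hSaS, hne, hmin, hbr⟩
    · rw [he]; exact hKcons
    rcases hbr with ⟨hSi, he⟩ | ⟨hSi, he⟩
    · obtain ⟨M, hM⟩ := hne
      rw [he]
      exact consistent_of_subset_world (hWorlds Sa hSaS M hM.1) (fun φ hφ => hφ M hM)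
    · obtain ⟨M, hM⟩ := hKne
      rw [he]
      exact consistent_of_subset_world hM.1 (fun φ hφ => hφ M (Or.inl hM))
  have post5 : L.Vacuity K od := by
    intro α hnα
    have hex : ∃ M ∈ L.worldsOf K, α ∈ M := by
      by_contra hc
      push_neg at hc
      apply hnα
      rw [hKth]
      intro M hM
      exact world_neg_of_notMem hM.1 (hc M hM)
    obtain ⟨M, hMK, hMα⟩ := hex
    have hne : (L.worldsOf K ∩ L.wS α).Nonempty := ⟨M, hMK, (mem_wS_iff hMK.1).mpr hMα⟩
    rw [expand_eq_th, vac α hne]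
  have post6 : L.Extensionality od := by
    intro α β hbi
    have hws : L.wS α = L.wS β := wS_eq_of_biimpl hbi
    rcases hcase α with ⟨he, hempt⟩ | ⟨Sa, hSaS, hne, hmin, hbr⟩
    · have hb : od β = K := (hod β).2 (fun X hX => by rw [← hws]; exact hempt X hX)
      rw [he, hb]
    · have hodβ := (hod β).1 Sa hSaS (by rw [← hws]; exact hne)
        (fun V hV hVne => hmin V hV (by rw [hws]; exact hVne))
      rcases hbr with ⟨hSi, he⟩ | ⟨hSi, he⟩
      · rw [he, hodβ.1 hSi, hws]
      · rw [he, hodβ.2 hSi, hws]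
  have post7 : L.StrictImprovement od := by
    intro α β hα himp
    have hcaseα : ∃ Sa ∈ Si, (Sa ∩ L.wS α).Nonempty := by
      rcases hcase α with ⟨he, hempt⟩ | ⟨Sa, hSaS, hne, hmin, hbr⟩
      · rw [he] at hα
        obtain ⟨M, hMK⟩ := hKne
        have hmem : M ∈ L.worldsOf K ∩ L.wS α := ⟨hMK, (mem_wS_iff hMK.1).mpr (hMK.2 hα)⟩
        rw [hempt _ hKS] at hmem
        exact absurd hmem (Set.notMem_empty M)
      rcases hbr with ⟨hSi, he⟩ | ⟨hSi, he⟩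
      · exact ⟨Sa, hSi, hne⟩
      · exfalso
        rw [he] at hα
        have hαK : α ∈ K := by
          rw [hKth]; intro M hM; exact hα M (Or.inl hM)
        obtain ⟨M, hMK⟩ := hKne
        have hne' : (L.worldsOf K ∩ L.wS α).Nonempty :=
          ⟨M, hMK, (mem_wS_iff hMK.1).mpr (hMK.2 hαK)⟩
        have heq : Sa = L.worldsOf K :=
          Set.Subset.antisymm (hmin _ hKS hne') (hKsubS Sa hSaS)
        rw [heq] at hSi
        exact hSi hKSi
    obtain ⟨Sa, hSaSi, hSane⟩ := hcaseα
    have hexβ : ∃ U ∈ S, (U ∩ L.wS β).Nonempty := by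
      obtain ⟨M, hM1, hM2⟩ := hSane
      exact ⟨Sa, hSiS hSaSi, M, hM1, wS_mono himp hM2⟩
    obtain ⟨Sb, hSbS, hSbne, hSbmin⟩ := hlimS β hexβ
    have hSbSi : Sb ∈ Si := by
      by_contra hc
      have h1 : Sa ⊆ Sb := hlast Sa hSaSi Sb hSbS hc
      have hSameets : (Sa ∩ L.wS β).Nonempty := by
        obtain ⟨M, hM1, hM2⟩ := hSane
        exact ⟨M, hM1, wS_mono himp hM2⟩
      have h2 := hSbmin Sa (hSiS hSaSi) hSameets
      have heq : Sb = Sa := Set.Subset.antisymm h2 h1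
      rw [heq] at hc
      exact hc hSaSi
    have hodβ := ((hod β).1 Sb hSbS hSbne hSbmin).1 hSbSi
    rw [hodβ]
    intro M hM
    exact (mem_wS_iff (hWorlds Sb hSbS M hM.1)).mp hM.2
  have post8 : L.NPersistence od := by
    intro α β h
    have key : (L.neg β ∈ K) ∧ ∀ X ∈ S, X ∩ L.wS β = ∅ := by
      rcases hcase β with ⟨he, hempt⟩ | ⟨Sb, hSbS, hne, hmin, hbr⟩
      · rw [he] at h; exact ⟨h, hempt⟩
      · exfalso
        obtain ⟨M, hM1, hM2⟩ := hne
        have hMw := hWorlds Sb hSbS M hM1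
        have hβM : β ∈ M := (mem_wS_iff hMw).mp hM2
        rcases hbr with ⟨hSi, he⟩ | ⟨hSi, he⟩
        · rw [he] at h
          exact world_not_both hMw hβM (h M ⟨hM1, hM2⟩)
        · rw [he] at h
          exact world_not_both hMw hβM (h M (Or.inr ⟨hM1, hM2⟩))
    obtain ⟨hnegK, hempty⟩ := key
    have hworldneg : ∀ X ∈ S, ∀ M ∈ X, L.neg β ∈ M := by
      intro X hX M hM
      apply world_neg_of_notMem (hWorlds X hX M hM)
      intro hβM
      have hmem : M ∈ X ∩ L.wS β := ⟨hM, (mem_wS_iff (hWorlds X hX M hM)).mpr hβM⟩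
      rw [hempty X hX] at hmem
      exact absurd hmem (Set.notMem_empty M)
    rcases hcase α with ⟨he, _⟩ | ⟨Sa, hSaS, hne, hmin, hbr⟩
    · rw [he]; exact hnegK
    rcases hbr with ⟨hSi, he⟩ | ⟨hSi, he⟩
    · rw [he]; intro M hM; exact hworldneg Sa hSaS M hM.1
    · rw [he]
      rintro M (hM | hM)
      · exact hM.2 hnegK
      · exact hworldneg Sa hSaS M hM.1
  have post9 : L.NRecovery K od := by
    intro α γ hγ
    show γ ∈ L.Cn (od α ∪ {L.neg α})
    apply (L.cn_deduction (od α) (L.neg α) γ).mpr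
    rcases hcase α with ⟨he, _⟩ | ⟨Sa, hSaS, hne, hmin, hbr⟩
    · rw [he]
      exact L.cn_monotony {γ} K (Set.singleton_subset_iff.mpr hγ) (impl_neg_mem_cn_right α γ)
    have hmem : ∀ X ∈ S, ∀ M ∈ X ∩ L.wS α, L.impl (L.neg α) γ ∈ M := by
      intro X hX M hM
      have hMw := hWorlds X hX M hM.1
      exact cn_subset_world hMw (Set.singleton_subset_iff.mpr ((mem_wS_iff hMw).mp hM.2))
        (impl_neg_mem_cn_left α γ)
    have hmemK : ∀ M ∈ L.worldsOf K, L.impl (L.neg α) γ ∈ M := fun M hM =>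
      cn_subset_world hM.1 (Set.singleton_subset_iff.mpr (hM.2 hγ)) (impl_neg_mem_cn_right α γ)
    rcases hbr with ⟨hSi, he⟩ | ⟨hSi, he⟩
    · rw [he, th_closed (fun M hM => hWorlds Sa hSaS M hM.1)]
      intro M hM
      exact hmem Sa hSaS M hM
    · rw [he, th_closed ?_]
      · rintro M (hM | hM)
        · exact hmemK M hM
        · exact hmem Sa hSaS M hM
      · rintro M (hM | hM)
        · exact hM.1
        · exact hWorlds Sa hSaS M hM.1
  have post10 : L.DisjunctiveOverlap od := by
    intro α β φ hφ
    obtain ⟨hφα, hφβ⟩ := hφ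
    have hwsd := wS_disj (L := L) α β
    rcases hcase (L.disj α β) with ⟨he, hempt⟩ | ⟨Sd, hSdS, hne, hmin, hbr⟩
    · rw [he]
      rcases hcase α with ⟨heα, _⟩ | ⟨Sa, hSaS, hneα, _, _⟩
      · rw [heα] at hφα; exact hφα
      · exfalso
        obtain ⟨M, hM1, hM2⟩ := hneα
        have hmem : M ∈ Sa ∩ L.wS (L.disj α β) := ⟨hM1, by rw [hwsd]; exact Or.inl hM2⟩
        rw [hempt Sa hSaS] at hmem
        exact absurd hmem (Set.notMem_empty M)
    have getcase : ∀ γ : L.Sentence, L.wS γ ⊆ L.wS (L.disj α β) → (Sd ∩ L.wS γ).Nonempty →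
        ((Sd ∈ Si ∧ od γ = L.th (Sd ∩ L.wS γ)) ∨
         (Sd ∉ Si ∧ od γ = L.th (L.worldsOf K ∪ (Sd ∩ L.wS γ)))) := by
      intro γ hsub hneγ
      rcases hcase γ with ⟨he', hempt'⟩ | ⟨Sg, hSgS, hneg, hming, hbrg⟩
      · rw [hempt' Sd hSdS] at hneγ
        exact absurd hneγ Set.not_nonempty_empty
      · have hSg : Sg = Sd := by
          apply Set.Subset.antisymm (hming Sd hSdS hneγ)
          apply hmin Sg hSgS
          obtain ⟨M, h1, h2⟩ := hneg
          exact ⟨M, h1, hsub h2⟩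
        rw [hSg] at hbrg
        exact hbrg
    have hsubα : L.wS α ⊆ L.wS (L.disj α β) := by rw [hwsd]; exact Set.subset_union_left
    have hsubβ : L.wS β ⊆ L.wS (L.disj α β) := by rw [hwsd]; exact Set.subset_union_right
    rcases hbr with ⟨hSdSi, he⟩ | ⟨hSdSi, he⟩
    · rw [he]
      intro M hM
      have hMd : M ∈ L.wS α ∪ L.wS β := by rw [← hwsd]; exact hM.2
      rcases hMd with hMα | hMβ
      · rcases getcase α hsubα ⟨M, hM.1, hMα⟩ with ⟨_, heα⟩ | ⟨hc, _⟩
        · rw [heα] at hφα; exact hφα M ⟨hM.1, hMα⟩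
        · exact absurd hSdSi hc
      · rcases getcase β hsubβ ⟨M, hM.1, hMβ⟩ with ⟨_, heβ⟩ | ⟨hc, _⟩
        · rw [heβ] at hφβ; exact hφβ M ⟨hM.1, hMβ⟩
        · exact absurd hSdSi hc
    · rw [he]
      rintro M (hMK | hM)
      · obtain ⟨M₀, hM₀1, hM₀2⟩ := hne
        have hM₀d : M₀ ∈ L.wS α ∪ L.wS β := by rw [← hwsd]; exact hM₀2
        rcases hM₀d with h0 | h0
        · rcases getcase α hsubα ⟨M₀, hM₀1, h0⟩ with ⟨hc, _⟩ | ⟨_, heα⟩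
          · exact absurd hc hSdSi
          · rw [heα] at hφα; exact hφα M (Or.inl hMK)
        · rcases getcase β hsubβ ⟨M₀, hM₀1, h0⟩ with ⟨hc, _⟩ | ⟨_, heβ⟩
          · exact absurd hc hSdSi
          · rw [heβ] at hφβ; exact hφβ M (Or.inl hMK)
      · have hMd : M ∈ L.wS α ∪ L.wS β := by rw [← hwsd]; exact hM.2
        rcases hMd with hMα | hMβ
        · rcases getcase α hsubα ⟨M, hM.1, hMα⟩ with ⟨hc, _⟩ | ⟨_, heα⟩
          · exact absurd hc hSdSi
          · rw [heα] at hφα; exact hφα M (Or.inr ⟨hM.1, hMα⟩)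
        · rcases getcase β hsubβ ⟨M, hM.1, hMβ⟩ with ⟨hc, _⟩ | ⟨_, heβ⟩
          · exact absurd hc hSdSi
          · rw [heβ] at hφβ; exact hφβ M (Or.inr ⟨hM.1, hMβ⟩)
  have post11 : L.DisjunctiveInclusion od := by
    intro α β hneg
    have hwsd := wS_disj (L := L) α β
    rcases hcase (L.disj α β) with ⟨he, hempt⟩ | ⟨Sd, hSdS, hne, hmin, hbr⟩
    · rw [he]
      rcases hcase α with ⟨heα, _⟩ | ⟨Sa, hSaS, hneα, _, _⟩
      · rw [heα]
      · exfalso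
        obtain ⟨M, h1, h2⟩ := hneα
        have hmem : M ∈ Sa ∩ L.wS (L.disj α β) := ⟨h1, by rw [hwsd]; exact Or.inl h2⟩
        rw [hempt Sa hSaS] at hmem
        exact absurd hmem (Set.notMem_empty M)
    have hSdα : (Sd ∩ L.wS α).Nonempty := by
      by_contra hc
      rw [Set.not_nonempty_iff_eq_empty] at hc
      apply hneg
      have hnegall : ∀ M, L.IsWorld M → M ∈ Sd → L.neg α ∈ M := by
        intro M hMw hMSd
        apply world_neg_of_notMem hMw
        intro hαM
        have hmem : M ∈ Sd ∩ L.wS α := ⟨hMSd, (mem_wS_iff hMw).mpr hαM⟩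
        rw [hc] at hmem
        exact absurd hmem (Set.notMem_empty M)
      rcases hbr with ⟨hSi, he⟩ | ⟨hSi, he⟩
      · rw [he]
        intro M hM
        exact hnegall M (hWorlds Sd hSdS M hM.1) hM.1
      · rw [he]
        rintro M (hM | hM)
        · exact hnegall M hM.1 (hKsubS Sd hSdS hM)
        · exact hnegall M (hWorlds Sd hSdS M hM.1) hM.1
    have getα : (Sd ∈ Si ∧ od α = L.th (Sd ∩ L.wS α)) ∨
        (Sd ∉ Si ∧ od α = L.th (L.worldsOf K ∪ (Sd ∩ L.wS α))) := by
      rcases hcase α with ⟨he', hempt'⟩ | ⟨Sg, hSgS, hneg', hming, hbrg⟩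
      · rw [hempt' Sd hSdS] at hSdα
        exact absurd hSdα Set.not_nonempty_empty
      · have hSg : Sg = Sd := by
          apply Set.Subset.antisymm (hming Sd hSdS hSdα)
          apply hmin Sg hSgS
          obtain ⟨M, h1, h2⟩ := hneg'
          exact ⟨M, h1, by rw [hwsd]; exact Or.inl h2⟩
        rw [hSg] at hbrg
        exact hbrg
    rcases hbr with ⟨hSi, he⟩ | ⟨hSi, he⟩
    · rcases getα with ⟨_, heα⟩ | ⟨hc, _⟩
      · rw [he, heα]
        exact th_antitone (fun M hM => ⟨hM.1, by rw [hwsd]; exact Or.inl hM.2⟩)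
      · exact absurd hSi hc
    · rcases getα with ⟨hc, _⟩ | ⟨_, heα⟩
      · exact absurd hc hSi
      · rw [he, heα]
        apply th_antitone
        rintro M (hM | hM)
        · exact Or.inl hM
        · exact Or.inr ⟨hM.1, by rw [hwsd]; exact Or.inl hM.2⟩
  exact ⟨post1, post2, post3, post4, post5, post6, post7, post8, post9, post10, post11⟩
end

section
/- Let K be a consistent belief set and let ⊙ be an operator on K satisfying, for all sentences α, β: weak relative success (α ∈ K⊙α or K⊙α ⊆ K), closure (K⊙α = Cn(K⊙α)), inclusion (K⊙α ⊆ K + α), consistency preservation (if K is consistent then K⊙α is consistent), vacuity (if ¬α ∉ K then K + α ⊆ K⊙α), extensionality (if ⊢ α ↔ β then K⊙α = K⊙β), strict improvement (if α ∈ K⊙α and ⊢ α → β then β ∈ K⊙β), N-persistence (if ¬β ∈ K⊙β then ¬β ∈ K⊙α for all α), N-recovery (K ⊆ (K⊙α) + ¬α), disjunctive overlap (K⊙α ∩ K⊙β ⊆ K⊙(α ∨ β)) and disjunctive inclusion (if ¬α ∉ K⊙(α ∨ β) then K⊙(α ∨ β) ⊆ K⊙α). Then there exists a two level system of spheres (𝕊_i,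 𝕊) centred on ‖K‖ such that for all α, K⊙α equals the outcome of the system of spheres-based two level CL revision operator induced by (𝕊_i, 𝕊) applied to α. -/
/-!
Write `K⋆α` for `(K⊙α) + α`, call `α` credible when `¬α ∉ K⊙α`, and say that `α` is at least as
plausible as `γ` when `¬α ∉ K⊙(α ∨ γ)`. Disjunctive overlap and inclusion, with N-persistence,
make this relation a total preorder on the credible sentences, and strict improvement makes the
sentences with `α ∈ K⊙α` an initial segment of it. The sphere of `γ` consists of `‖K‖` and the
worlds of `K⋆δ` for every credible `δ` at least as plausible as `γ`; the outer spheres are those of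
credible sentences, the inner ones those of sentences with `γ ∈ K⊙γ`. If `¬α ∈ K`, the smallest
sphere meeting `‖α‖` is the sphere of `α`, and its `α`-worlds are exactly the worlds of `K⋆α`.
Then `K⊙α = K⋆α` when `α ∈ K⊙α`, while otherwise N-recovery gives `K⊙α = K ∩ K⋆α`; when
`¬α ∉ K` vacuity gives `K⊙α = K + α`, and a non-credible `α` has `K⊙α = K`.
-/

theorem IsLeast.sep_of_initial {X : Type*} {S Si : Set (Set X)} {p : Set X → Prop} {U : Set X}
    (hSi : Si ⊆ S) (hinit : ∀ A ∈ Si, ∀ B ∈ S, B ∉ Si → A ⊆ B)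
    (hU : IsLeast {V ∈ S | p V} U) (hex : ∃ V ∈ Si, p V) : IsLeast {V ∈ Si | p V} U := by
  obtain ⟨V, hV, hpV⟩ := hex
  have hUV : U ⊆ V := hU.2 ⟨hSi hV, hpV⟩
  have hUSi : U ∈ Si := by
    by_contra hU'
    exact hU' (by rwa [subset_antisymm hUV (hinit V hV U hU.1.1 hU')])
  exact ⟨⟨hUSi, hU.1.2⟩, fun W hW => hU.2 ⟨hSi hW.1, hW.2⟩⟩

namespace PropLanguage

variable {L : PropLanguage}

structure IsValuation (L : PropLanguage) (v : L.Sentence → Bool) : Prop where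
  falsum : v L.falsum = false
  neg : ∀ β, v (L.neg β) = !v β
  conj : ∀ β γ, v (L.conj β γ) = (v β && v γ)
  disj : ∀ β γ, v (L.disj β γ) = (v β || v γ)
  impl : ∀ β γ, v (L.impl β γ) = (!v β || v γ)
  biimpl : ∀ β γ, v (L.biimpl β γ) = (v β == v γ)

theorem mem_cn_of_entails {A : Set L.Sentence} {c : L.Sentence}
    (h : ∀ v, L.IsValuation v → (∀ a ∈ A, v a = true) → v c = true) : c ∈ L.Cn A :=
  L.cn_supraclassical A c fun v h₀ h₁ h₂ h₃ h₄ h₅ => h v ⟨h₀, h₁, h₂, h₃, h₄, h₅⟩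

theorem mem_cn_of_valid {A : Set L.Sentence} {c : L.Sentence}
    (h : ∀ v, L.IsValuation v → v c = true) : c ∈ L.Cn A :=
  mem_cn_of_entails fun v hv _ => h v hv

theorem isBeliefSet_cn (A : Set L.Sentence) : L.IsBeliefSet (L.Cn A) :=
  (L.cn_iteration A).symm

theorem isBeliefSet_expand (T : Set L.Sentence) (a : L.Sentence) :
    L.IsBeliefSet (L.expand T a) :=
  L.isBeliefSet_cn _

namespace IsBeliefSet

variable {T : Set L.Sentence} {a b c : L.Sentence}

theorem cn_subset (hT : L.IsBeliefSet T) {A : Set L.Sentence} (h : A ⊆ T) : L.Cn A ⊆ T :=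
  (L.cn_monotony A T h).trans hT.ge

theorem mem_of_entails (hT : L.IsBeliefSet T) (ha : a ∈ T)
    (h : ∀ v, L.IsValuation v → v a = true → v c = true) : c ∈ T :=
  hT.cn_subset (Set.singleton_subset_iff.2 ha) (mem_cn_of_entails fun v hv hA => h v hv (hA a rfl))

theorem mem_of_entails₂ (hT : L.IsBeliefSet T) (ha : a ∈ T) (hb : b ∈ T)
    (h : ∀ v, L.IsValuation v → v a = true → v b = true → v c = true) : c ∈ T :=
  hT.cn_subset (Set.pair_subset ha hb)
    (mem_cn_of_entails fun v hv hA => h v hv (hA a (Or.inl rfl)) (hA b (Or.inr rfl)))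

theorem mem_expand_iff (hT : L.IsBeliefSet T) : c ∈ L.expand T a ↔ L.impl a c ∈ T := by
  rw [expand, L.cn_deduction, ← hT]

theorem expand_eq_self (hT : L.IsBeliefSet T) (ha : a ∈ T) : L.expand T a = T :=
  subset_antisymm (hT.cn_subset (Set.union_subset subset_rfl (Set.singleton_subset_iff.2 ha)))
    fun _ hc => L.cn_inclusion _ (Or.inl hc)

theorem not_consistent (hT : L.IsBeliefSet T) (ha : a ∈ T) (hn : L.neg a ∈ T) :
    ¬ L.Consistent T := by
  intro hcons
  apply hcons
  rw [← hT]
  exact hT.mem_of_entails₂ ha hn fun v hv => by grind [hv.neg]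

theorem consistent_expand_iff (hT : L.IsBeliefSet T) :
    L.Consistent (L.expand T a) ↔ L.neg a ∉ T := by
  rw [Consistent, expand, L.cn_iteration, L.cn_deduction, ← hT]
  exact not_congr ⟨fun h => hT.mem_of_entails h fun v hv => by grind [hv.neg, hv.impl, hv.falsum],
    fun h => hT.mem_of_entails h fun v hv => by grind [hv.neg, hv.impl, hv.falsum]⟩

end IsBeliefSet

theorem exists_isWorld_superset {A : Set L.Sentence} (h : L.Consistent A) :
    ∃ M, L.IsWorld M ∧ A ⊆ M := by
  have hchain : ∀ c ⊆ {B | L.Consistent B}, IsChain (· ⊆ ·) c → c.Nonempty →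
      ∃ ub ∈ {B | L.Consistent B}, ∀ s ∈ c, s ⊆ ub := by
    intro c hc hchain hne
    refine ⟨⋃₀ c, fun hf => ?_, fun s hs => Set.subset_sUnion_of_mem hs⟩
    obtain ⟨F, hFc, hF, hfF⟩ := L.cn_compact _ _ hf
    obtain ⟨t, htc, hFt⟩ :=
      DirectedOn.exists_mem_subset_of_finite_of_subset_sUnion hne hchain.directedOn hF hFc
    exact hc htc (L.cn_monotony _ _ hFt hfF)
  obtain ⟨M, hAM, hmax⟩ := zorn_subset_nonempty {B | L.Consistent B} hchain A h
  exact ⟨M, ⟨hmax.1, fun M' hM' hMM' => subset_antisymm (hmax.2 hM' hMM') hMM'⟩, hAM⟩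

namespace IsWorld

variable {M : Set L.Sentence} {a b : L.Sentence}

theorem isBeliefSet (hM : L.IsWorld M) : L.IsBeliefSet M :=
  (hM.2 (L.Cn M) (by rw [Consistent, L.cn_iteration]; exact hM.1) (L.cn_inclusion M)).symm

theorem neg_not_mem (hM : L.IsWorld M) (ha : a ∈ M) : L.neg a ∉ M :=
  fun hn => hM.isBeliefSet.not_consistent ha hn hM.1

theorem mem_of_impl_mem (hM : L.IsWorld M) (hab : L.impl a b ∈ M) (ha : a ∈ M) : b ∈ M :=
  hM.isBeliefSet.mem_of_entails₂ hab ha fun v hv => by grind [hv.impl]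

end IsWorld

theorem mem_cn_iff_forall_isWorld {A : Set L.Sentence} {c : L.Sentence} :
    c ∈ L.Cn A ↔ ∀ M, L.IsWorld M → A ⊆ M → c ∈ M := by
  refine ⟨fun hc M hM hAM => hM.isBeliefSet.cn_subset hAM hc, fun h => ?_⟩
  by_contra hc
  have hnn : L.neg (L.neg c) ∉ L.Cn A := fun hnn =>
    hc ((L.isBeliefSet_cn A).mem_of_entails hnn fun v hv => by grind [hv.neg])
  obtain ⟨M, hM, hsub⟩ :=
    exists_isWorld_superset ((L.isBeliefSet_cn A).consistent_expand_iff.2 hnn)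
  have hAM : A ⊆ M := fun a ha => hsub (L.cn_inclusion _ (Or.inl (L.cn_inclusion A ha)))
  exact hM.neg_not_mem (h M hM hAM) (hsub (L.cn_inclusion _ (Or.inr rfl)))

theorem th_worldsOf (A : Set L.Sentence) : L.th (L.worldsOf A) = L.Cn A := by
  ext c
  rw [mem_cn_iff_forall_isWorld]
  exact ⟨fun h M hM hAM => h M ⟨hM, hAM⟩, fun h M hM => h M hM.1 hM.2⟩

theorem IsBeliefSet.th_worldsOf {T : Set L.Sentence} (hT : L.IsBeliefSet T) :
    L.th (L.worldsOf T) = T := by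
  rw [L.th_worldsOf, ← hT]

theorem th_union (X Y : Set (Set L.Sentence)) : L.th (X ∪ Y) = L.th X ∩ L.th Y := by
  ext c
  simp only [th, Set.mem_union, Set.mem_inter_iff]
  exact ⟨fun h => ⟨fun M hM => h M (Or.inl hM), fun M hM => h M (Or.inr hM)⟩,
    fun h M hM => hM.elim (h.1 M) (h.2 M)⟩

theorem mem_wS {M : Set L.Sentence} {a : L.Sentence} : M ∈ L.wS a ↔ L.IsWorld M ∧ a ∈ M :=
  ⟨fun hM => ⟨hM.1, hM.2 (L.cn_inclusion _ rfl)⟩,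
    fun hM => ⟨hM.1, hM.1.isBeliefSet.cn_subset (Set.singleton_subset_iff.2 hM.2)⟩⟩

theorem worldsOf_inter_wS (K : Set L.Sentence) (a : L.Sentence) :
    L.worldsOf K ∩ L.wS a = L.worldsOf (K ∪ {a}) := by
  ext M
  simp only [Set.mem_inter_iff, mem_wS, worldsOf, Set.mem_ofPred_eq, Set.union_subset_iff,
    Set.singleton_subset_iff]
  tauto

theorem worldsOf_expand_subset_wS (T : Set L.Sentence) (a : L.Sentence) :
    L.worldsOf (L.expand T a) ⊆ L.wS a :=
  fun _ hM => mem_wS.2 ⟨hM.1, hM.2 (L.cn_inclusion _ (Or.inr rfl))⟩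

theorem neg_not_mem_of_mem_worldsOf_of_mem_wS {K M : Set L.Sentence} {a : L.Sentence}
    (hMK : M ∈ L.worldsOf K) (hMa : M ∈ L.wS a) : L.neg a ∉ K :=
  fun hn => (mem_wS.1 hMa).1.neg_not_mem (mem_wS.1 hMa).2 (hMK.2 hn)

theorem worldsOf_inter_wS_nonempty_iff {K : Set L.Sentence} (hK : L.IsBeliefSet K)
    {a : L.Sentence} : (L.worldsOf K ∩ L.wS a).Nonempty ↔ L.neg a ∉ K := by
  refine ⟨fun ⟨_, hMK, hMa⟩ => neg_not_mem_of_mem_worldsOf_of_mem_wS hMK hMa, fun h => ?_⟩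
  obtain ⟨M, hM, hKM⟩ := exists_isWorld_superset (hK.consistent_expand_iff.2 h)
  exact ⟨M, ⟨hM, fun φ hφ => hKM (L.cn_inclusion _ (Or.inl hφ))⟩,
    worldsOf_expand_subset_wS K a ⟨hM, hKM⟩⟩

structure CLPostulates (L : PropLanguage) (K : Set L.Sentence)
    (od : L.Sentence → Set L.Sentence) : Prop where
  isBeliefSet : L.IsBeliefSet K
  consistent : L.Consistent K
  weakRelativeSuccess : L.WeakRelativeSuccess K od
  closure : L.Closure od
  inclusion : L.Inclusion K od
  consistencyPreservation : L.ConsistencyPreservation K od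
  vacuity : L.Vacuity K od
  extensionality : L.Extensionality od
  strictImprovement : L.StrictImprovement od
  nPersistence : L.NPersistence od
  nRecovery : L.NRecovery K od
  disjunctiveOverlap : L.DisjunctiveOverlap od
  disjunctiveInclusion : L.DisjunctiveInclusion od

def Credible (od : L.Sentence → Set L.Sentence) (α : L.Sentence) : Prop :=
  L.neg α ∉ od α

def AtLeastAsPlausible (od : L.Sentence → Set L.Sentence) (α γ : L.Sentence) : Prop :=
  L.neg α ∉ od (L.disj α γ)

namespace CLPostulates

variable {K : Set L.Sentence} {od : L.Sentence → Set L.Sentence} {α β γ δ φ ψ : L.Sentence}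

theorem isBeliefSet_od (P : L.CLPostulates K od) (α : L.Sentence) : L.IsBeliefSet (od α) :=
  P.closure α

theorem credible_of_mem (P : L.CLPostulates K od) (h : α ∈ od α) : Credible od α :=
  fun hn => (P.isBeliefSet_od α).not_consistent h hn (P.consistencyPreservation P.consistent α)

theorem od_congr (P : L.CLPostulates K od) (h : ∀ v, L.IsValuation v → v α = v β) :
    od α = od β :=
  P.extensionality α β (mem_cn_of_valid fun v hv => by rw [hv.biimpl, h v hv, beq_self_eq_true])

theorem od_disj_comm (P : L.CLPostulates K od) (α β : L.Sentence) :
    od (L.disj α β) = od (L.disj β α) :=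
  P.od_congr fun v hv => by rw [hv.disj, hv.disj, Bool.or_comm]

theorem od_subset_of_equiv_disj (P : L.CLPostulates K od)
    (hφ : ∀ v, L.IsValuation v → v φ = (v β || v γ)) (h : L.neg β ∉ od φ) : od φ ⊆ od β := by
  rw [P.od_congr (β := L.disj β γ) fun v hv => by rw [hφ v hv, hv.disj]] at h ⊢
  exact P.disjunctiveInclusion β γ h

theorem impl_neg_mem_od (P : L.CLPostulates K od) (hφ : φ ∈ K) (α : L.Sentence) :
    L.impl (L.neg α) φ ∈ od α :=
  (P.isBeliefSet_od α).mem_expand_iff.1 (P.nRecovery α hφ)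

theorem mem_od_of_mem_K (P : L.CLPostulates K od) (hφ : φ ∈ K)
    (h : ∀ v, L.IsValuation v → v α = true → v φ = true) : φ ∈ od α :=
  (P.isBeliefSet_od α).mem_of_entails (P.impl_neg_mem_od hφ α) fun v hv => by
    have := h v hv
    grind [hv.impl, hv.neg]

theorem od_eq_K_of_not_credible (P : L.CLPostulates K od) (h : ¬ Credible od α) : od α = K := by
  rw [Credible, not_not] at h
  refine subset_antisymm ((P.weakRelativeSuccess α).resolve_left fun hα => P.credible_of_mem hα h)
    fun φ hφ => (P.isBeliefSet_od α).mem_of_entails₂ h (P.impl_neg_mem_od hφ α) fun v hv => ?_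
  grind [hv.impl, hv.neg]

theorem od_eq_expand_of_neg_not_mem (P : L.CLPostulates K od) (h : L.neg α ∉ K) :
    od α = L.expand K α :=
  subset_antisymm (P.inclusion α) (P.vacuity α h)

theorem credible_of_entails (P : L.CLPostulates K od) (hα : Credible od α)
    (h : ∀ v, L.IsValuation v → v α = true → v φ = true) : Credible od φ :=
  fun hφ => hα ((P.isBeliefSet_od α).mem_of_entails (P.nPersistence α φ hφ) fun v hv => by
    have := h v hv
    grind [hv.neg])

theorem credible_disj_of_atLeastAsPlausible (P : L.CLPostulates K od)
    (h : AtLeastAsPlausible od α δ) : Credible od (L.disj α δ) :=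
  fun hn => h ((P.isBeliefSet_od _).mem_of_entails hn fun v hv => by grind [hv.neg, hv.disj])

/-- The counterpart for `⊙` of the instance `K⋆α ⊆ K⋆(α ∨ β) + α` of AGM's (⋆7). -/
theorem impl_mem_od_disj (P : L.CLPostulates K od) (hψ : ψ ∈ od α) (β : L.Sentence) :
    L.impl α ψ ∈ od (L.disj α β) := by
  by_cases hα : L.neg α ∈ K
  · -- `K⊙(α ∨ β)` is `K⊙(α ∨ (β ∧ ¬α))`, and `¬α ∈ K⊙(β ∧ ¬α)` by N-recovery
    set β' := L.conj β (L.neg α)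
    have hα' : L.impl α ψ ∈ od α :=
      (P.isBeliefSet_od α).mem_of_entails hψ fun v hv => by grind [hv.impl]
    have hβ' : L.impl α ψ ∈ od β' :=
      (P.isBeliefSet_od β').mem_of_entails
        (P.mem_od_of_mem_K hα fun v hv => by grind [hv.conj, hv.neg])
        fun v hv => by grind [hv.impl, hv.neg]
    rw [P.od_congr (β := L.disj α β') fun v hv => by
      rw [hv.disj, hv.disj, hv.conj, hv.neg]; cases v α <;> simp]
    exact P.disjunctiveOverlap α β' ⟨hα', hβ'⟩
  · have hK : L.impl α ψ ∈ K := P.isBeliefSet.mem_expand_iff.1 (P.inclusion α hψ)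
    have hαβ : L.neg (L.disj α β) ∉ K := fun hn =>
      hα (P.isBeliefSet.mem_of_entails hn fun v hv => by grind [hv.neg, hv.disj])
    exact P.vacuity _ hαβ (L.cn_inclusion _ (Or.inl hK))

theorem od_eq_inter_of_not_mem (P : L.CLPostulates K od) (hα : α ∉ od α) :
    od α = K ∩ L.expand (od α) α :=
  subset_antisymm
    (fun φ hφ => ⟨(P.weakRelativeSuccess α).resolve_left hα hφ, L.cn_inclusion _ (Or.inl hφ)⟩)
    fun φ ⟨hK, hexp⟩ => (P.isBeliefSet_od α).mem_of_entails₂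
      ((P.isBeliefSet_od α).mem_expand_iff.1 hexp) (P.impl_neg_mem_od hK α)
      fun v hv => by grind [hv.impl, hv.neg]

theorem neg_mem_od_of_mem_of_not_mem (P : L.CLPostulates K od) (hγ : γ ∈ od γ)
    (hδ : δ ∉ od δ) : L.neg δ ∈ od γ := by
  by_contra hnδ
  have hγδ : L.neg (L.conj γ δ) ∉ od γ := fun hn =>
    hnδ ((P.isBeliefSet_od γ).mem_of_entails₂ hγ hn fun v hv => by grind [hv.neg, hv.conj])
  have hsub : od γ ⊆ od (L.conj γ δ) :=
    P.od_subset_of_equiv_disj (γ := L.conj γ (L.neg δ))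
      (fun v hv => by rw [hv.conj, hv.conj, hv.neg]; cases v δ <;> simp) hγδ
  have hγδ_low : L.conj γ δ ∉ od (L.conj γ δ) := fun h =>
    hδ (P.strictImprovement _ δ h (mem_cn_of_valid fun v hv => by grind [hv.impl, hv.conj]))
  have hγK : γ ∈ K := (P.weakRelativeSuccess _).resolve_left hγδ_low (hsub hγ)
  have hnγK : L.neg γ ∉ K := fun hn => P.isBeliefSet.not_consistent hγK hn P.consistent
  rw [P.od_eq_expand_of_neg_not_mem hnγK, P.isBeliefSet.expand_eq_self hγK] at hnδ
  exact hδ (P.vacuity δ hnδ (L.cn_inclusion _ (Or.inr rfl)))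

theorem atLeastAsPlausible_of_neg_not_mem_K (P : L.CLPostulates K od) (h : L.neg α ∉ K)
    (γ : L.Sentence) : AtLeastAsPlausible od α γ := fun hn =>
  h (P.isBeliefSet.mem_of_entails (P.isBeliefSet.mem_expand_iff.1 (P.inclusion _ hn))
    fun v hv => by grind [hv.impl, hv.disj, hv.neg])

theorem atLeastAsPlausible_refl (P : L.CLPostulates K od) (h : Credible od γ) :
    AtLeastAsPlausible od γ γ := by
  rwa [AtLeastAsPlausible,
    P.od_congr (α := L.disj γ γ) (β := γ) fun v hv => by rw [hv.disj, Bool.or_self]]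

theorem atLeastAsPlausible_of_neg_not_mem (P : L.CLPostulates K od) (hδ : Credible od δ)
    (h : L.neg α ∉ od δ) : AtLeastAsPlausible od α δ := by
  intro hα
  have hδ' : L.neg δ ∉ od (L.disj α δ) := fun hn =>
    P.credible_of_entails hδ (φ := L.disj α δ) (fun v hv => by grind [hv.disj])
      ((P.isBeliefSet_od _).mem_of_entails₂ hα hn fun v hv => by grind [hv.neg, hv.disj])
  exact h (P.od_subset_of_equiv_disj (γ := α) (fun v hv => by rw [hv.disj, Bool.or_comm]) hδ' hα)

theorem atLeastAsPlausible_total (P : L.CLPostulates K od) (hα : Credible od α)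
    (γ : L.Sentence) : AtLeastAsPlausible od α γ ∨ AtLeastAsPlausible od γ α := by
  refine or_iff_not_imp_left.2 fun hαγ hγα => ?_
  rw [AtLeastAsPlausible, not_not] at hαγ
  rw [P.od_disj_comm] at hγα
  exact P.credible_of_entails hα (φ := L.disj α γ) (fun v hv => by grind [hv.disj])
    ((P.isBeliefSet_od _).mem_of_entails₂ hαγ hγα fun v hv => by grind [hv.neg, hv.disj])

theorem atLeastAsPlausible_trans (P : L.CLPostulates K od) (hαδ : AtLeastAsPlausible od α δ)
    (hδγ : AtLeastAsPlausible od δ γ) : AtLeastAsPlausible od α γ := by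
  intro hα
  set φ := L.disj (L.disj α γ) δ
  have hαφ : L.neg α ∈ od φ :=
    (P.isBeliefSet_od φ).mem_of_entails (P.impl_mem_od_disj hα δ) fun v hv => by
      grind [hv.impl, hv.disj, hv.neg]
  have hδγφ : L.neg (L.disj δ γ) ∉ od φ := fun hn =>
    P.credible_of_entails (P.credible_disj_of_atLeastAsPlausible hαδ) (φ := φ)
      (fun v hv => by grind [hv.disj])
      ((P.isBeliefSet_od φ).mem_of_entails₂ hαφ hn fun v hv => by grind [hv.neg, hv.disj])
  have hδφ : L.neg δ ∉ od φ := fun hn =>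
    hδγ (P.od_subset_of_equiv_disj (γ := α) (fun v hv => by grind [hv.disj]) hδγφ hn)
  have hαδφ : L.neg (L.disj α δ) ∉ od φ := fun hn =>
    hδφ ((P.isBeliefSet_od φ).mem_of_entails hn fun v hv => by grind [hv.neg, hv.disj])
  exact hαδ (P.od_subset_of_equiv_disj (γ := γ) (fun v hv => by grind [hv.disj]) hαδφ hαφ)

theorem mem_od_of_atLeastAsPlausible (P : L.CLPostulates K od) (hγ : γ ∈ od γ)
    (h : AtLeastAsPlausible od α γ) : α ∈ od α := by
  by_contra hα
  refine h (P.neg_mem_od_of_mem_of_not_mem (P.strictImprovement γ _ hγ ?_) hα)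
  exact mem_cn_of_valid fun v hv => by grind [hv.impl, hv.disj]

theorem expand_od_subset_of_atLeastAsPlausible (P : L.CLPostulates K od)
    (h : AtLeastAsPlausible od δ α) {M : Set L.Sentence} (hM : L.IsWorld M)
    (hδM : L.expand (od δ) δ ⊆ M) (hαM : α ∈ M) : L.expand (od α) α ⊆ M := by
  intro φ hφ
  have hφ' : L.impl α φ ∈ od (L.disj δ α) := by
    rw [P.od_disj_comm]
    exact (P.isBeliefSet_od _).mem_of_entails
      (P.impl_mem_od_disj ((P.isBeliefSet_od α).mem_expand_iff.1 hφ) δ)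
      fun v hv => by grind [hv.impl]
  exact hM.mem_of_impl_mem (hδM (L.cn_inclusion _ (Or.inl (P.disjunctiveInclusion δ α h hφ')))) hαM

end CLPostulates

def sphere (K : Set L.Sentence) (od : L.Sentence → Set L.Sentence) (γ : L.Sentence) :
    Set (Set L.Sentence) :=
  {M | M ∈ L.worldsOf K ∨
    ∃ δ, Credible od δ ∧ AtLeastAsPlausible od δ γ ∧ M ∈ L.worldsOf (L.expand (od δ) δ)}

def spheres (K : Set L.Sentence) (od : L.Sentence → Set L.Sentence) :
    Set (Set (Set L.Sentence)) :=
  insert (L.worldsOf K) (sphere K od '' {γ | Credible od γ})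

def innerSpheres (K : Set L.Sentence) (od : L.Sentence → Set L.Sentence) :
    Set (Set (Set L.Sentence)) :=
  insert (L.worldsOf K) (sphere K od '' {γ | γ ∈ od γ})

variable {K : Set L.Sentence} {od : L.Sentence → Set L.Sentence} {α γ γ' : L.Sentence}
  {M U : Set L.Sentence}

theorem worldsOf_subset_sphere (γ : L.Sentence) : L.worldsOf K ⊆ sphere K od γ :=
  fun _ => Or.inl

theorem worldsOf_subset_of_mem_spheres {U : Set (Set L.Sentence)} (hU : U ∈ spheres K od) :
    L.worldsOf K ⊆ U := by
  rcases hU with rfl | ⟨γ, -, rfl⟩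
  exacts [subset_rfl, worldsOf_subset_sphere γ]

theorem isWorld_of_mem_sphere (hM : M ∈ sphere K od γ) : L.IsWorld M := by
  rcases hM with hM | ⟨δ, -, -, hM⟩ <;> exact hM.1

namespace CLPostulates

theorem worldsOf_expand_subset_sphere (P : L.CLPostulates K od) (hγ : Credible od γ) :
    L.worldsOf (L.expand (od γ) γ) ⊆ sphere K od γ :=
  fun _ hM => Or.inr ⟨γ, hγ, P.atLeastAsPlausible_refl hγ, hM⟩

theorem sphere_mono (P : L.CLPostulates K od) (h : AtLeastAsPlausible od γ γ') :
    sphere K od γ ⊆ sphere K od γ' := by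
  rintro M (hM | ⟨δ, hδ, hδγ, hM⟩)
  exacts [Or.inl hM, Or.inr ⟨δ, hδ, P.atLeastAsPlausible_trans hδγ h, hM⟩]

theorem credible_of_mem_sphere (P : L.CLPostulates K od) (hM : M ∈ sphere K od γ)
    (hα : α ∈ M) : Credible od α := by
  intro hn
  rcases hM with hM | ⟨δ, -, -, hM⟩
  · exact hM.1.neg_not_mem hα (hM.2 (P.od_eq_K_of_not_credible (not_not.2 hn) ▸ hn))
  · exact hM.1.neg_not_mem hα (hM.2 (L.cn_inclusion _ (Or.inl (P.nPersistence δ α hn))))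

theorem atLeastAsPlausible_of_mem_sphere (P : L.CLPostulates K od) (hM : M ∈ sphere K od γ)
    (hα : α ∈ M) : AtLeastAsPlausible od α γ := by
  rcases hM with hM | ⟨δ, hδ, hδγ, hM⟩
  · exact P.atLeastAsPlausible_of_neg_not_mem_K (fun hn => hM.1.neg_not_mem hα (hM.2 hn)) γ
  · refine P.atLeastAsPlausible_trans (P.atLeastAsPlausible_of_neg_not_mem hδ fun hn => ?_) hδγ
    exact hM.1.neg_not_mem hα (hM.2 (L.cn_inclusion _ (Or.inl hn)))

theorem sphere_inter_wS_nonempty (P : L.CLPostulates K od) (hα : Credible od α) :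
    (sphere K od α ∩ L.wS α).Nonempty := by
  obtain ⟨M, hM⟩ := exists_isWorld_superset ((P.isBeliefSet_od α).consistent_expand_iff.2 hα)
  exact ⟨M, P.worldsOf_expand_subset_sphere hα hM, worldsOf_expand_subset_wS _ α hM⟩

theorem sphere_inter_wS (P : L.CLPostulates K od) (hαK : L.neg α ∈ K) (hα : Credible od α) :
    sphere K od α ∩ L.wS α = L.worldsOf (L.expand (od α) α) := by
  refine subset_antisymm ?_ fun M hM =>
    ⟨P.worldsOf_expand_subset_sphere hα hM, worldsOf_expand_subset_wS _ α hM⟩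
  rintro M ⟨hK | ⟨δ, -, hδα, hM⟩, hMα⟩
  · exact absurd hαK (neg_not_mem_of_mem_worldsOf_of_mem_wS hK hMα)
  · exact ⟨hM.1, P.expand_od_subset_of_atLeastAsPlausible hδα hM.1 hM.2 (mem_wS.1 hMα).2⟩

theorem spheres_total (P : L.CLPostulates K od) :
    ∀ U ∈ spheres K od, ∀ V ∈ spheres K od, U ⊆ V ∨ V ⊆ U := by
  rintro U (rfl | ⟨γ, hγ, rfl⟩) V hV
  · exact Or.inl (worldsOf_subset_of_mem_spheres hV)
  rcases hV with rfl | ⟨γ', -, rfl⟩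
  · exact Or.inr (worldsOf_subset_sphere γ)
  · exact (P.atLeastAsPlausible_total hγ γ').imp P.sphere_mono P.sphere_mono

theorem innerSpheres_subset_spheres (P : L.CLPostulates K od) :
    innerSpheres K od ⊆ spheres K od :=
  Set.insert_subset_insert (Set.image_mono fun _ => P.credible_of_mem)

theorem subset_of_mem_innerSpheres (P : L.CLPostulates K od) {X Y : Set (Set L.Sentence)}
    (hX : X ∈ innerSpheres K od) (hY : Y ∈ spheres K od) (hY' : Y ∉ innerSpheres K od) :
    X ⊆ Y := by
  rcases hX with rfl | ⟨γ, hγ, rfl⟩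
  · exact worldsOf_subset_of_mem_spheres hY
  rcases hY with rfl | ⟨δ, hδ, rfl⟩
  · exact absurd (Set.mem_insert _ _) hY'
  · have hδ' : δ ∉ od δ := fun h => hY' (Or.inr ⟨δ, h, rfl⟩)
    refine P.sphere_mono ((P.atLeastAsPlausible_total (P.credible_of_mem hγ) δ).resolve_right ?_)
    exact fun h => hδ' (P.mem_od_of_atLeastAsPlausible hγ h)

theorem credible_of_meets (P : L.CLPostulates K od) {U : Set (Set L.Sentence)}
    (hU : U ∈ spheres K od) (hUα : (U ∩ L.wS α).Nonempty) : Credible od α := by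
  obtain ⟨M, hMU, hMα⟩ := hUα
  rcases hU with rfl | ⟨γ, -, rfl⟩
  · exact P.credible_of_mem_sphere (worldsOf_subset_sphere α hMU) (mem_wS.1 hMα).2
  · exact P.credible_of_mem_sphere hMU (mem_wS.1 hMα).2

theorem isLeast_worldsOf (P : L.CLPostulates K od) (hαK : L.neg α ∉ K) :
    IsLeast {U ∈ spheres K od | (U ∩ L.wS α).Nonempty} (L.worldsOf K) :=
  ⟨⟨Set.mem_insert _ _, (worldsOf_inter_wS_nonempty_iff P.isBeliefSet).2 hαK⟩,
    fun _ hU => worldsOf_subset_of_mem_spheres hU.1⟩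

theorem isLeast_sphere (P : L.CLPostulates K od) (hαK : L.neg α ∈ K) (hα : Credible od α) :
    IsLeast {U ∈ spheres K od | (U ∩ L.wS α).Nonempty} (sphere K od α) := by
  refine ⟨⟨Or.inr ⟨α, hα, rfl⟩, P.sphere_inter_wS_nonempty hα⟩, ?_⟩
  rintro U ⟨rfl | ⟨γ, -, rfl⟩, M, hMU, hMα⟩
  · exact absurd hαK (neg_not_mem_of_mem_worldsOf_of_mem_wS hMU hMα)
  · exact P.sphere_mono (P.atLeastAsPlausible_of_mem_sphere hMU (mem_wS.1 hMα).2)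

theorem exists_isLeast_spheres (P : L.CLPostulates K od)
    (h : ∃ U ∈ spheres K od, (U ∩ L.wS α).Nonempty) :
    ∃ U, IsLeast {U ∈ spheres K od | (U ∩ L.wS α).Nonempty} U := by
  obtain ⟨U, hU, hUα⟩ := h
  by_cases hαK : L.neg α ∈ K
  exacts [⟨_, P.isLeast_sphere hαK (P.credible_of_meets hU hUα)⟩, ⟨_, P.isLeast_worldsOf hαK⟩]

theorem sphere_mem_innerSpheres_iff (P : L.CLPostulates K od) (hαK : L.neg α ∈ K)
    (hα : Credible od α) : sphere K od α ∈ innerSpheres K od ↔ α ∈ od α := by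
  refine ⟨fun h => ?_, fun h => Or.inr ⟨α, h, rfl⟩⟩
  obtain ⟨M, hMS, hMα⟩ := P.sphere_inter_wS_nonempty hα
  rcases h with h | ⟨γ, hγ, h⟩
  · exact absurd hαK (neg_not_mem_of_mem_worldsOf_of_mem_wS (h ▸ hMS) hMα)
  · exact P.mem_od_of_atLeastAsPlausible hγ
      (P.atLeastAsPlausible_of_mem_sphere (h ▸ hMS) (mem_wS.1 hMα).2)

theorem isTwoLevelSystem (P : L.CLPostulates K od) :
    L.IsTwoLevelSystem K (innerSpheres K od) (spheres K od) := by
  have hinner := P.innerSpheres_subset_spheres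
  refine ⟨?_, P.spheres_total, fun U hU V hV => P.spheres_total U (hinner hU) V (hinner hV),
    Set.mem_insert _ _, fun _ => worldsOf_subset_of_mem_spheres, Set.mem_insert _ _,
    fun _ hU => worldsOf_subset_of_mem_spheres (hinner hU), fun α h => ?_, fun α h => ?_,
    hinner, fun _ hX _ => P.subset_of_mem_innerSpheres hX⟩
  · rintro X (rfl | ⟨γ, -, rfl⟩) M hM
    exacts [hM.1, isWorld_of_mem_sphere hM]
  · obtain ⟨U, hU⟩ := P.exists_isLeast_spheres h
    exact ⟨U, hU.1.1, hU.1.2, fun V hV hVα => hU.2 ⟨hV, hVα⟩⟩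
  · obtain ⟨V, hV, hVα⟩ := h
    obtain ⟨U, hU⟩ := P.exists_isLeast_spheres ⟨V, hinner hV, hVα⟩
    have hU' :=
      hU.sep_of_initial hinner (fun _ hX _ => P.subset_of_mem_innerSpheres hX) ⟨V, hV, hVα⟩
    exact ⟨U, hU'.1.1, hU'.1.2, fun V hV hVα => hU'.2 ⟨hV, hVα⟩⟩

theorem isSphereRevision (P : L.CLPostulates K od) :
    L.IsSphereRevision K (innerSpheres K od) (spheres K od) od := by
  refine fun α => ⟨fun Sa hSa hSaα hmin => ?_, fun h => ?_⟩
  · have hleast : IsLeast {U ∈ spheres K od | (U ∩ L.wS α).Nonempty} Sa :=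
      ⟨⟨hSa, hSaα⟩, fun V hV => hmin V hV.1 hV.2⟩
    have hα := P.credible_of_meets hSa hSaα
    by_cases hαK : L.neg α ∈ K
    · obtain rfl := hleast.unique (P.isLeast_sphere hαK hα)
      rw [P.sphere_mem_innerSpheres_iff hαK hα, P.sphere_inter_wS hαK hα, th_union,
        P.isBeliefSet.th_worldsOf, (L.isBeliefSet_expand _ _).th_worldsOf]
      refine ⟨fun h => ((P.isBeliefSet_od α).expand_eq_self h).symm, P.od_eq_inter_of_not_mem⟩
    · obtain rfl := hleast.unique (P.isLeast_worldsOf hαK)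
      refine ⟨fun _ => ?_, fun h => absurd (Set.mem_insert _ _) h⟩
      rw [worldsOf_inter_wS, th_worldsOf]
      exact P.od_eq_expand_of_neg_not_mem hαK
  · refine P.od_eq_K_of_not_credible fun hα => ?_
    exact (P.sphere_inter_wS_nonempty hα).ne_empty (h _ (Or.inr ⟨α, hα, rfl⟩))

end CLPostulates

end PropLanguage

open PropLanguage in
/-- an operator satisfying the eleven listed postulates is a
system of spheres-based two level CL revision operator. -/
theorem postulates_imply_sphere_twoLevelCL
    (L : PropLanguage) (K : Set L.Sentence)
    (hK : L.IsBeliefSet K) (hKcons : L.Consistent K)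
    (od : L.Sentence → Set L.Sentence)
    (h1 : L.WeakRelativeSuccess K od) (h2 : L.Closure od)
    (h3 : L.Inclusion K od) (h4 : L.ConsistencyPreservation K od)
    (h5 : L.Vacuity K od) (h6 : L.Extensionality od)
    (h7 : L.StrictImprovement od) (h8 : L.NPersistence od)
    (h9 : L.NRecovery K od) (h10 : L.DisjunctiveOverlap od)
    (h11 : L.DisjunctiveInclusion od) :
    ∃ Si S : Set (Set (Set L.Sentence)),
      L.IsTwoLevelSystem K Si S ∧ L.IsSphereRevision K Si S od := by
  have P : L.CLPostulates K od := ⟨hK, hKcons, h1, h2, h3, h4, h5, h6, h7, h8, h9, h10, h11⟩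
  exact ⟨innerSpheres K od, spheres K od, P.isTwoLevelSystem, P.isSphereRevision⟩
end

section
/- Let K be a consistent belief set and let ⊙ be an operator on K satisfying, for all sentences α, β: weak relative success (α ∈ K⊙α or K⊙α ⊆ K), closure (K⊙α = Cn(K⊙α)), inclusion (K⊙α ⊆ K + α), consistency preservation (if K is consistent then K⊙α is consistent), vacuity (if ¬α ∉ K then K + α ⊆ K⊙α), extensionality (if ⊢ α ↔ β then K⊙α = K⊙β), strict improvement (if α ∈ K⊙α and ⊢ α → β then β ∈ K⊙β), N-persistence (if ¬β ∈ K⊙β then ¬β ∈ K⊙α for all α), N-recovery (K ⊆ (K⊙α) + ¬α), disjunctive overlap (K⊙α ∩ K⊙β ⊆ K⊙(α ∨ β)) and disjunctive inclusion (if ¬α ∉ K⊙(α ∨ β) then K⊙(α ∨ β) ⊆ K⊙α). Then there exist an AGM revision ⋆ on K and sets C_H, C_L ⊆ L such that: ⊙ is the two level CL revision operator induced by ⋆, C_H and C_L; C_L satisfies credibility of logical equivalents and element consistency; C_H ∩ C_L = ∅; C_H satisfies element consistency, credibility lower bounding and single sentence closure; and conditions ((C_H ∪ C_L) - ⋆)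 and (C_H - ⋆) hold. -/
section TwoLevelAux

variable {L : PropLanguage}

/-- A Boolean valuation respecting the connectives. -/
def Resp (L : PropLanguage) (v : L.Sentence → Bool) : Prop :=
  v L.falsum = false ∧
  (∀ β, v (L.neg β) = !v β) ∧
  (∀ β γ, v (L.conj β γ) = (v β && v γ)) ∧
  (∀ β γ, v (L.disj β γ) = (v β || v γ)) ∧
  (∀ β γ, v (L.impl β γ) = (!v β || v γ)) ∧
  (∀ β γ, v (L.biimpl β γ) = (v β == v γ))

theorem cn_mp0 {A : Set L.Sentence} {ψ : L.Sentence}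
    (ht : ∀ v, Resp L v → v ψ = true) : ψ ∈ L.Cn A :=
  L.cn_supraclassical A ψ fun v hf hn hc hd hi hb _ =>
    ht v ⟨hf, hn, hc, hd, hi, hb⟩

theorem cn_mp1 {A : Set L.Sentence} {φ₁ ψ : L.Sentence} (h1 : φ₁ ∈ L.Cn A)
    (ht : ∀ v, Resp L v → v φ₁ = true → v ψ = true) : ψ ∈ L.Cn A := by
  have h : ψ ∈ L.Cn (L.Cn A) :=
    L.cn_supraclassical _ ψ fun v hf hn hc hd hi hb hA =>
      ht v ⟨hf, hn, hc, hd, hi, hb⟩ (hA _ h1)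
  rwa [L.cn_iteration] at h

theorem cn_mp2 {A : Set L.Sentence} {φ₁ φ₂ ψ : L.Sentence}
    (h1 : φ₁ ∈ L.Cn A) (h2 : φ₂ ∈ L.Cn A)
    (ht : ∀ v, Resp L v → v φ₁ = true → v φ₂ = true → v ψ = true) :
    ψ ∈ L.Cn A := by
  have h : ψ ∈ L.Cn (L.Cn A) :=
    L.cn_supraclassical _ ψ fun v hf hn hc hd hi hb hA =>
      ht v ⟨hf, hn, hc, hd, hi, hb⟩ (hA _ h1) (hA _ h2)
  rwa [L.cn_iteration] at h

theorem cn_singleton_iff {α ψ : L.Sentence} :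
    ψ ∈ L.Cn {α} ↔ L.impl α ψ ∈ L.Cn (∅ : Set L.Sentence) := by
  have h := L.cn_deduction ∅ α ψ
  rwa [Set.empty_union] at h

theorem mem_expand_iff {A : Set L.Sentence} {α ψ : L.Sentence} :
    ψ ∈ L.expand A α ↔ L.impl α ψ ∈ L.Cn A := L.cn_deduction A α ψ

/-! Boolean tautology lemmas. -/

variable {v : L.Sentence → Bool} {α β φ ψ κ : L.Sentence}

theorem tA (hv : Resp L v) (p1 : v α = true) (p2 : v (L.neg α) = true) :
    v ψ = true := by
  obtain ⟨hf, hn, hc, hd, hi, hb⟩ := hv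
  rw [hn] at p2; rw [p1] at p2; exact absurd p2 (by simp)

theorem tNegDisj (hv : Resp L v) (p1 : v (L.neg α) = true)
    (p2 : v (L.neg β) = true) : v (L.neg (L.disj α β)) = true := by
  obtain ⟨hf, hn, hc, hd, hi, hb⟩ := hv
  simp only [hn, hd] at p1 p2 ⊢
  cases hva : v α <;> cases hvb : v β <;> simp_all

theorem tNegL (hv : Resp L v) (p1 : v (L.neg (L.disj α β)) = true) :
    v (L.neg α) = true := by
  obtain ⟨hf, hn, hc, hd, hi, hb⟩ := hv
  simp only [hn, hd] at p1 ⊢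
  cases hva : v α <;> cases hvb : v β <;> simp_all

theorem tNegR (hv : Resp L v) (p1 : v (L.neg (L.disj α β)) = true) :
    v (L.neg β) = true := by
  obtain ⟨hf, hn, hc, hd, hi, hb⟩ := hv
  simp only [hn, hd] at p1 ⊢
  cases hva : v α <;> cases hvb : v β <;> simp_all

theorem tMpNeg (hv : Resp L v) (p1 : v (L.impl (L.neg α) κ) = true)
    (p2 : v (L.neg α) = true) : v κ = true := by
  obtain ⟨hf, hn, hc, hd, hi, hb⟩ := hv
  simp only [hn, hi] at p1 p2
  cases hva : v α <;> simp_all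

theorem tDisjImpL (hv : Resp L v) (p1 : v (L.impl α φ) = true)
    (p2 : v (L.impl (L.neg α) (L.impl β φ)) = true) :
    v (L.impl (L.disj α β) φ) = true := by
  obtain ⟨hf, hn, hc, hd, hi, hb⟩ := hv
  simp only [hn, hi, hd] at p1 p2 ⊢
  cases hva : v α <;> cases hvb : v β <;> simp_all

theorem tDisjImpR (hv : Resp L v) (p1 : v (L.impl β φ) = true)
    (p2 : v (L.impl (L.neg β) (L.impl α φ)) = true) :
    v (L.impl (L.disj α β) φ) = true := by
  obtain ⟨hf, hn, hc, hd, hi, hb⟩ := hv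
  simp only [hn, hi, hd] at p1 p2 ⊢
  cases hva : v α <;> cases hvb : v β <;> simp_all

theorem tDisjImpBoth (hv : Resp L v) (p1 : v (L.impl α φ) = true)
    (p2 : v (L.impl β φ) = true) :
    v (L.impl (L.disj α β) φ) = true := by
  obtain ⟨hf, hn, hc, hd, hi, hb⟩ := hv
  simp only [hi, hd] at p1 p2 ⊢
  cases hva : v α <;> cases hvb : v β <;> simp_all

theorem tImpOfDisjImp (hv : Resp L v) (p1 : v (L.impl (L.disj α β) φ) = true) :
    v (L.impl α φ) = true := by
  obtain ⟨hf, hn, hc, hd, hi, hb⟩ := hv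
  simp only [hi, hd] at p1 ⊢
  cases hva : v α <;> cases hvb : v β <;> simp_all

theorem tMpBoth (hv : Resp L v) (p1 : v (L.impl α ψ) = true)
    (p2 : v (L.impl (L.neg α) ψ) = true) : v ψ = true := by
  obtain ⟨hf, hn, hc, hd, hi, hb⟩ := hv
  simp only [hn, hi] at p1 p2
  cases hva : v α <;> simp_all

theorem tNegOfImpFalse (hv : Resp L v) (p1 : v (L.impl α L.falsum) = true) :
    v (L.neg α) = true := by
  obtain ⟨hf, hn, hc, hd, hi, hb⟩ := hv
  simp only [hn, hi, hf] at p1 ⊢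
  cases hva : v α <;> simp_all

theorem tDisjElim (hv : Resp L v) (p1 : v (L.disj α β) = true)
    (p2 : v (L.neg α) = true) : v β = true := by
  obtain ⟨hf, hn, hc, hd, hi, hb⟩ := hv
  simp only [hn, hd] at p1 p2
  cases hva : v α <;> cases hvb : v β <;> simp_all

theorem tBiimplComm (hv : Resp L v) :
    v (L.biimpl (L.disj α β) (L.disj β α)) = true := by
  obtain ⟨hf, hn, hc, hd, hi, hb⟩ := hv
  simp only [hb, hd]
  cases v α <;> cases v β <;> rfl

theorem tImplDisjR (hv : Resp L v) : v (L.impl β (L.disj α β)) = true := by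
  obtain ⟨hf, hn, hc, hd, hi, hb⟩ := hv
  simp only [hi, hd]
  cases v α <;> cases v β <;> rfl

theorem tBiimplMp (hv : Resp L v) (p1 : v (L.biimpl α β) = true)
    (p2 : v α = true) : v β = true := by
  obtain ⟨hf, hn, hc, hd, hi, hb⟩ := hv
  simp only [hb] at p1
  cases hva : v α <;> cases hvb : v β <;> simp_all

theorem tBiimplMpr (hv : Resp L v) (p1 : v (L.biimpl α β) = true)
    (p2 : v β = true) : v α = true := by
  obtain ⟨hf, hn, hc, hd, hi, hb⟩ := hv
  simp only [hb] at p1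
  cases hva : v α <;> cases hvb : v β <;> simp_all

theorem tBiimplNeg (hv : Resp L v) (p1 : v (L.biimpl α β) = true)
    (p2 : v (L.neg α) = true) : v (L.neg β) = true := by
  obtain ⟨hf, hn, hc, hd, hi, hb⟩ := hv
  simp only [hb] at p1
  simp only [hn] at p2 ⊢
  cases hva : v α <;> cases hvb : v β <;> simp_all

theorem tBiimplNegr (hv : Resp L v) (p1 : v (L.biimpl α β) = true)
    (p2 : v (L.neg β) = true) : v (L.neg α) = true := by
  obtain ⟨hf, hn, hc, hd, hi, hb⟩ := hv
  simp only [hb] at p1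
  simp only [hn] at p2 ⊢
  cases hva : v α <;> cases hvb : v β <;> simp_all

theorem tBiimplImp (hv : Resp L v) (p1 : v (L.biimpl α β) = true)
    (p2 : v (L.impl α ψ) = true) : v (L.impl β ψ) = true := by
  obtain ⟨hf, hn, hc, hd, hi, hb⟩ := hv
  simp only [hb] at p1
  simp only [hi] at p2 ⊢
  cases hva : v α <;> cases hvb : v β <;> simp_all

theorem tBiimplImpr (hv : Resp L v) (p1 : v (L.biimpl α β) = true)
    (p2 : v (L.impl β ψ) = true) : v (L.impl α ψ) = true := by
  obtain ⟨hf, hn, hc, hd, hi, hb⟩ := hv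
  simp only [hb] at p1
  simp only [hi] at p2 ⊢
  cases hva : v α <;> cases hvb : v β <;> simp_all

end TwoLevelAux

open PropLanguage in
/-- an operator satisfying the eleven listed postulates is a two
level CL revision operator induced by an AGM revision `⋆` and sets `C_H`,
`C_L` with the stated properties, where conditions `((C_H ∪ C_L) - ⋆)` and
`(C_H - ⋆)` hold. -/
theorem postulates_imply_twoLevelCL_AGM
    (L : PropLanguage) (K : Set L.Sentence)
    (hK : L.IsBeliefSet K) (hKcons : L.Consistent K)
    (od : L.Sentence → Set L.Sentence)
    (h1 : L.WeakRelativeSuccess K od) (h2 : L.Closure od)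
    (h3 : L.Inclusion K od) (h4 : L.ConsistencyPreservation K od)
    (h5 : L.Vacuity K od) (h6 : L.Extensionality od)
    (h7 : L.StrictImprovement od) (h8 : L.NPersistence od)
    (h9 : L.NRecovery K od) (h10 : L.DisjunctiveOverlap od)
    (h11 : L.DisjunctiveInclusion od) :
    ∃ (star : L.Sentence → Set L.Sentence) (CH CL : Set L.Sentence),
      L.IsAGMRevision K star ∧
      L.IsTwoLevelCL K od star CH CL ∧
      L.CredLogEquiv CL ∧ L.ElementConsistency CL ∧
      CH ∩ CL = ∅ ∧
      L.ElementConsistency CH ∧ L.CredLowerBound K CH ∧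
      L.SingleSentenceClosure CH ∧
      L.CondCStar K star (CH ∪ CL) ∧ L.CondCStar K star CH := by
  classical
  -- elementary closure helpers
  have hcl : ∀ (α : L.Sentence) {ψ : L.Sentence}, ψ ∈ L.Cn (od α) → ψ ∈ od α := by
    intro α ψ h; rw [h2 α]; exact h
  have hin : ∀ (α : L.Sentence) {ψ : L.Sentence}, ψ ∈ od α → ψ ∈ L.Cn (od α) :=
    fun α _ h => L.cn_inclusion _ h
  have hclK : ∀ {ψ : L.Sentence}, ψ ∈ L.Cn K → ψ ∈ K := by
    intro ψ h; rw [hK]; exact h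
  have hinK : ∀ {ψ : L.Sentence}, ψ ∈ K → ψ ∈ L.Cn K := fun h => L.cn_inclusion _ h
  have odmp1 : ∀ (α : L.Sentence) {φ₁ ψ : L.Sentence}, φ₁ ∈ od α →
      (∀ v, Resp L v → v φ₁ = true → v ψ = true) → ψ ∈ od α :=
    fun α _ _ hφ ht => hcl α (cn_mp1 (hin α hφ) ht)
  have odmp2 : ∀ (α : L.Sentence) {φ₁ φ₂ ψ : L.Sentence}, φ₁ ∈ od α → φ₂ ∈ od α →
      (∀ v, Resp L v → v φ₁ = true → v φ₂ = true → v ψ = true) → ψ ∈ od α :=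
    fun α _ _ _ ha hb ht => hcl α (cn_mp2 (hin α ha) (hin α hb) ht)
  have Kmp2 : ∀ {φ₁ φ₂ ψ : L.Sentence}, φ₁ ∈ K → φ₂ ∈ K →
      (∀ v, Resp L v → v φ₁ = true → v φ₂ = true → v ψ = true) → ψ ∈ K :=
    fun ha hb ht => hclK (cn_mp2 (hinK ha) (hinK hb) ht)
  have h0od : ∀ (α : L.Sentence) {ψ : L.Sentence},
      ψ ∈ L.Cn (∅ : Set L.Sentence) → ψ ∈ od α :=
    fun α _ h => hcl α (L.cn_monotony _ _ (Set.empty_subset _) h)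
  -- basic facts about od
  have hOdCons : ∀ α : L.Sentence, L.falsum ∉ L.Cn (od α) := fun α => h4 hKcons α
  have hNotBoth : ∀ α : L.Sentence, α ∈ od α → L.neg α ∉ od α := by
    intro α ha hn
    exact hOdCons α (cn_mp2 (hin α ha) (hin α hn) fun v hv p1 p2 => tA hv p1 p2)
  have hSelfExp : ∀ α : L.Sentence, α ∈ L.expand K α :=
    fun α => L.cn_inclusion _ (Set.mem_union_right _ rfl)
  have hVacMem : ∀ α : L.Sentence, L.neg α ∉ K → α ∈ od α :=
    fun α h => h5 α h (hSelfExp α)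
  have hNegK : ∀ α : L.Sentence, α ∉ od α → L.neg α ∈ K := by
    intro α h
    by_contra hn
    exact h (hVacMem α hn)
  have hOdSubK : ∀ α : L.Sentence, α ∉ od α → od α ⊆ K :=
    fun α h => (h1 α).resolve_left h
  have hNRec : ∀ (α : L.Sentence) {κ : L.Sentence}, κ ∈ K →
      L.impl (L.neg α) κ ∈ od α :=
    fun α κ hκ => hcl α (mem_expand_iff.1 (h9 α hκ))
  have hRejEqK : ∀ α : L.Sentence, L.neg α ∈ od α → od α = K := by
    intro α h
    refine Set.Subset.antisymm (hOdSubK α fun ha => hNotBoth α ha h) ?_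
    intro κ hκ
    exact odmp2 α (hNRec α hκ) h fun v hv p1 p2 => tMpNeg hv p1 p2
  have hPersist : ∀ α β : L.Sentence, L.neg β ∈ od β → L.neg β ∈ od α := h8
  have hcommOd : ∀ α β : L.Sentence, od (L.disj α β) = od (L.disj β α) :=
    fun α β => h6 _ _ (cn_mp0 fun v hv => tBiimplComm hv)
  have h11' : ∀ α β : L.Sentence, L.neg β ∉ od (L.disj α β) →
      od (L.disj α β) ⊆ od β := by
    intro α β h
    rw [hcommOd α β] at h ⊢
    exact h11 β α h
  have hDisjCH : ∀ α β : L.Sentence, β ∈ od β → L.disj α β ∈ od (L.disj α β) :=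
    fun α β hb => h7 β (L.disj α β) hb (cn_mp0 fun v hv => tImplDisjR hv)
  have hRejDisjL : ∀ α β : L.Sentence, L.neg (L.disj α β) ∈ od (L.disj α β) →
      L.neg α ∈ od α :=
    fun α β h => odmp1 α (hPersist α _ h) fun v hv p1 => tNegL hv p1
  have hRejDisjR : ∀ α β : L.Sentence, L.neg (L.disj α β) ∈ od (L.disj α β) →
      L.neg β ∈ od β :=
    fun α β h => odmp1 β (hPersist β _ h) fun v hv p1 => tNegR hv p1
  -- the key lemma for condition (C_H - ⋆)
  have hCondCH : ∀ α β : L.Sentence, α ∉ od α → β ∈ od β → L.neg α ∈ od β := by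
    intro α β hna hb
    by_cases hr : L.neg α ∈ od α
    · exact hPersist β α hr
    · by_cases hg : L.neg α ∈ od (L.disj α β)
      · by_cases hnb : L.neg β ∈ od (L.disj α β)
        · exfalso
          have hng : L.neg (L.disj α β) ∈ od (L.disj α β) :=
            odmp2 _ hg hnb fun v hv p1 p2 => tNegDisj hv p1 p2
          exact hNotBoth β hb (hRejDisjR α β hng)
        · exact h11' α β hnb hg
      · have hsub := h11 α β hg
        have hγ : L.disj α β ∈ od (L.disj α β) := hDisjCH α β hb
        have hγK : L.disj α β ∈ K := hOdSubK α hna (hsub hγ)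
        have hnaK : L.neg α ∈ K := hNegK α hna
        have hbK : β ∈ K := Kmp2 hγK hnaK fun v hv p1 p2 => tDisjElim hv p1 p2
        have hnbK : L.neg β ∉ K := fun hnb =>
          hKcons (cn_mp2 (hinK hbK) (hinK hnb) fun v hv p1 p2 => tA hv p1 p2)
        exact h5 β hnbK (L.cn_monotony _ _ Set.subset_union_left (hinK hnaK))
  -- the revision operator
  obtain ⟨star, hstar⟩ : ∃ star : L.Sentence → Set L.Sentence, ∀ α,
      (L.neg α ∈ od α → star α = L.Cn {α}) ∧
      (L.neg α ∉ od α → star α = L.Cn (od α ∪ {α})) :=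
    ⟨fun α => if h : L.neg α ∈ od α then L.Cn {α} else L.Cn (od α ∪ {α}),
      fun α => ⟨fun h => dif_pos h, fun h => dif_neg h⟩⟩
  have hsr : ∀ α : L.Sentence, L.neg α ∈ od α → star α = L.Cn {α} :=
    fun α h => (hstar α).1 h
  have hsn : ∀ α : L.Sentence, L.neg α ∉ od α → star α = L.Cn (od α ∪ {α}) :=
    fun α h => (hstar α).2 h
  have hOdSubStar : ∀ α : L.Sentence, L.neg α ∉ od α → od α ⊆ star α := by
    intro α h ψ hψ
    rw [hsn α h]
    exact L.cn_inclusion _ (Set.mem_union_left _ hψ)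
  have hStarMem : ∀ α ψ : L.Sentence, L.neg α ∉ od α →
      (ψ ∈ star α ↔ L.impl α ψ ∈ od α) := by
    intro α ψ h
    rw [hsn α h]
    constructor
    · intro hh; exact hcl α ((L.cn_deduction (od α) α ψ).1 hh)
    · intro hh; exact (L.cn_deduction (od α) α ψ).2 (hin α hh)
  have hImpSelf : ∀ α φ : L.Sentence, φ ∈ star α → L.impl α φ ∈ od α := by
    intro α φ h
    by_cases hr : L.neg α ∈ od α
    · rw [hsr α hr] at h
      exact h0od α (cn_singleton_iff.1 h)
    · exact (hStarMem α φ hr).1 h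
  -- AGM postulates
  have star1 : ∀ α : L.Sentence, star α = L.Cn (star α) := by
    intro α
    by_cases hr : L.neg α ∈ od α
    · rw [hsr α hr, L.cn_iteration]
    · rw [hsn α hr, L.cn_iteration]
  have star2 : ∀ α : L.Sentence, α ∈ star α := by
    intro α
    by_cases hr : L.neg α ∈ od α
    · rw [hsr α hr]; exact L.cn_inclusion _ rfl
    · rw [hsn α hr]; exact L.cn_inclusion _ (Set.mem_union_right _ rfl)
  have star3 : ∀ α : L.Sentence, star α ⊆ L.expand K α := by
    intro α
    by_cases hr : L.neg α ∈ od α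
    · rw [hsr α hr]
      exact L.cn_monotony _ _ Set.subset_union_right
    · rw [hsn α hr]
      intro ψ hψ
      have hs : od α ∪ {α} ⊆ L.Cn (K ∪ {α}) :=
        Set.union_subset (h3 α) (by
          intro x hx
          rcases hx with rfl
          exact L.cn_inclusion _ (Set.mem_union_right _ rfl))
      have hmono := L.cn_monotony _ _ hs hψ
      rwa [L.cn_iteration] at hmono
  have star4 : ∀ α : L.Sentence, L.neg α ∉ K → L.expand K α ⊆ star α := by
    intro α h
    have hmem : α ∈ od α := hVacMem α h
    have hr : L.neg α ∉ od α := hNotBoth α hmem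
    intro ψ hψ
    exact hOdSubStar α hr (h5 α h hψ)
  have star5 : ∀ α : L.Sentence, L.Consistent {α} → L.Consistent (star α) := by
    intro α hcons
    by_cases hr : L.neg α ∈ od α
    · rw [hsr α hr]
      show L.falsum ∉ L.Cn (L.Cn {α})
      rw [L.cn_iteration]
      exact hcons
    · rw [hsn α hr]
      show L.falsum ∉ L.Cn (L.Cn (od α ∪ {α}))
      rw [L.cn_iteration]
      intro hbad
      have himp : L.impl α L.falsum ∈ od α :=
        hcl α ((L.cn_deduction (od α) α L.falsum).1 hbad)
      exact hr (odmp1 α himp fun v hv p1 => tNegOfImpFalse hv p1)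
  have hImpK : ∀ α φ : L.Sentence, φ ∈ star α → L.impl α φ ∈ K :=
    fun α φ h => hclK (mem_expand_iff.1 (star3 α h))
  have star6 : ∀ α β : L.Sentence, L.biimpl α β ∈ L.Cn (∅ : Set L.Sentence) →
      star α = star β := by
    intro α β hab
    have hodeq := h6 α β hab
    have htr : L.neg α ∈ od α → L.neg β ∈ od β := fun h =>
      odmp2 β (hodeq ▸ h) (h0od β hab) fun v hv p1 p2 => tBiimplNeg hv p2 p1
    have htr' : L.neg β ∈ od β → L.neg α ∈ od α := fun h =>
      odmp2 α (hodeq.symm ▸ h) (h0od α hab) fun v hv p1 p2 => tBiimplNegr hv p2 p1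
    by_cases hr : L.neg α ∈ od α
    · rw [hsr α hr, hsr β (htr hr)]
      apply Set.Subset.antisymm
      · intro ψ hψ
        exact cn_singleton_iff.2 (cn_mp2 (cn_singleton_iff.1 hψ) hab
          fun v hv p1 p2 => tBiimplImp hv p2 p1)
      · intro ψ hψ
        exact cn_singleton_iff.2 (cn_mp2 (cn_singleton_iff.1 hψ) hab
          fun v hv p1 p2 => tBiimplImpr hv p2 p1)
    · have hrb : L.neg β ∉ od β := fun h => hr (htr' h)
      rw [hsn α hr, hsn β hrb, ← hodeq]
      apply Set.Subset.antisymm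
      · intro ψ hψ
        refine (L.cn_deduction (od α) β ψ).2 ?_
        exact hin α (odmp2 α (hcl α ((L.cn_deduction (od α) α ψ).1 hψ)) (h0od α hab)
          fun v hv p1 p2 => tBiimplImp hv p2 p1)
      · intro ψ hψ
        refine (L.cn_deduction (od α) α ψ).2 ?_
        exact hin α (odmp2 α (hcl α ((L.cn_deduction (od α) β ψ).1 hψ)) (h0od α hab)
          fun v hv p1 p2 => tBiimplImpr hv p2 p1)
  have star7 : ∀ α β : L.Sentence, star α ∩ star β ⊆ star (L.disj α β) := by
    intro α β φ hφ
    obtain ⟨ha, hb⟩ := hφ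
    have h1a : L.impl α φ ∈ od α := hImpSelf α φ ha
    have h1b : L.impl β φ ∈ od β := hImpSelf β φ hb
    have h2a : L.impl β φ ∈ K := hImpK β φ hb
    have h2b : L.impl α φ ∈ K := hImpK α φ ha
    have h3a : L.impl (L.neg α) (L.impl β φ) ∈ od α := hNRec α h2a
    have h3b : L.impl (L.neg β) (L.impl α φ) ∈ od β := hNRec β h2b
    have h4a : L.impl (L.disj α β) φ ∈ od α :=
      odmp2 α h1a h3a fun v hv p1 p2 => tDisjImpL hv p1 p2
    have h4b : L.impl (L.disj α β) φ ∈ od β :=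
      odmp2 β h1b h3b fun v hv p1 p2 => tDisjImpR hv p1 p2
    have h5' : L.impl (L.disj α β) φ ∈ od (L.disj α β) := h10 α β ⟨h4a, h4b⟩
    by_cases hr : L.neg (L.disj α β) ∈ od (L.disj α β)
    · have hra : L.neg α ∈ od α := hRejDisjL α β hr
      have hrb : L.neg β ∈ od β := hRejDisjR α β hr
      rw [hsr α hra] at ha
      rw [hsr β hrb] at hb
      rw [hsr _ hr]
      exact cn_singleton_iff.2 (cn_mp2 (cn_singleton_iff.1 ha) (cn_singleton_iff.1 hb)
        fun v hv p1 p2 => tDisjImpBoth hv p1 p2)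
    · exact (hStarMem _ φ hr).2 h5'
  have star8 : ∀ α β : L.Sentence, L.neg α ∉ star (L.disj α β) →
      star (L.disj α β) ⊆ star α := by
    intro α β hna
    by_cases hr : L.neg (L.disj α β) ∈ od (L.disj α β)
    · have hra : L.neg α ∈ od α := hRejDisjL α β hr
      rw [hsr _ hr, hsr α hra]
      intro φ hφ
      exact cn_singleton_iff.2 (cn_mp1 (cn_singleton_iff.1 hφ)
        fun v hv p1 => tImpOfDisjImp hv p1)
    · have hnaOd : L.neg α ∉ od (L.disj α β) :=
        fun h => hna (hOdSubStar _ hr h)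
      have hsub := h11 α β hnaOd
      have hrα : L.neg α ∉ od α := fun h => hnaOd (hPersist (L.disj α β) α h)
      intro φ hφ
      have himp : L.impl (L.disj α β) φ ∈ od (L.disj α β) :=
        (hStarMem _ φ hr).1 hφ
      exact (hStarMem α φ hrα).2 (odmp1 α (hsub himp)
        fun v hv p1 => tImpOfDisjImp hv p1)
  -- two level CL
  have htwoLevel : L.IsTwoLevelCL K od star {α | α ∈ od α}
      {α | α ∉ od α ∧ L.neg α ∉ od α} := by
    intro α
    refine ⟨?_, ?_, ?_⟩
    · intro hCH
      have hCH' : α ∈ od α := hCH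
      have hr : L.neg α ∉ od α := hNotBoth α hCH'
      rw [hsn α hr]
      apply Set.Subset.antisymm
      · intro ψ h; exact L.cn_inclusion _ (Set.mem_union_left _ h)
      · intro ψ h
        refine hcl α (L.cn_monotony _ _ ?_ h)
        exact Set.union_subset (Set.Subset.refl _) (by
          intro x hx; rcases hx with rfl; exact hCH')
    · intro hCL
      obtain ⟨hna, hr⟩ := hCL
      apply Set.Subset.antisymm
      · intro ψ h
        exact ⟨hOdSubStar α hr h, hOdSubK α hna h⟩
      · rintro ψ ⟨hs, hk⟩
        have hi1 : L.impl α ψ ∈ od α := (hStarMem α ψ hr).1 hs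
        have hi2 : L.impl (L.neg α) ψ ∈ od α := hNRec α hk
        exact odmp2 α hi1 hi2 fun v hv p1 p2 => tMpBoth hv p1 p2
    · intro hN
      simp only [Set.mem_union, Set.mem_setOf_eq, not_or, not_and, not_not] at hN
      exact hRejEqK α (hN.2 hN.1)
  -- properties of C_L and C_H
  have hCLequiv : L.CredLogEquiv {α | α ∉ od α ∧ L.neg α ∉ od α} := by
    intro α β hab
    have hodeq := h6 α β hab
    have m1 : α ∈ od α ↔ β ∈ od β := by
      constructor
      · intro h
        exact odmp2 β (hodeq ▸ h) (h0od β hab) fun v hv p1 p2 => tBiimplMp hv p2 p1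
      · intro h
        exact odmp2 α (hodeq.symm ▸ h) (h0od α hab) fun v hv p1 p2 => tBiimplMpr hv p2 p1
    have m2 : L.neg α ∈ od α ↔ L.neg β ∈ od β := by
      constructor
      · intro h
        exact odmp2 β (hodeq ▸ h) (h0od β hab) fun v hv p1 p2 => tBiimplNeg hv p2 p1
      · intro h
        exact odmp2 α (hodeq.symm ▸ h) (h0od α hab) fun v hv p1 p2 => tBiimplNegr hv p2 p1
    simp only [Set.mem_setOf_eq]
    rw [m1, m2]
  have hCLcons : L.ElementConsistency {α | α ∉ od α ∧ L.neg α ∉ od α} := by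
    intro α hα hbad
    have himp : L.impl α L.falsum ∈ L.Cn (∅ : Set L.Sentence) := cn_singleton_iff.1 hbad
    have hneg' : L.neg α ∈ L.Cn (∅ : Set L.Sentence) :=
      cn_mp1 himp fun v hv p1 => tNegOfImpFalse hv p1
    exact hα.2 (h0od α hneg')
  have hCHcons : L.ElementConsistency {α | α ∈ od α} := by
    intro α hα hbad
    have himp : L.impl α L.falsum ∈ L.Cn (∅ : Set L.Sentence) := cn_singleton_iff.1 hbad
    have hneg' : L.neg α ∈ L.Cn (∅ : Set L.Sentence) :=
      cn_mp1 himp fun v hv p1 => tNegOfImpFalse hv p1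
    exact hNotBoth α hα (h0od α hneg')
  have hLB : L.CredLowerBound K {α | α ∈ od α} := by
    intro _ φ hφ
    by_cases hnφ : L.neg φ ∈ K
    · exact absurd (cn_mp2 (hinK hφ) (hinK hnφ) fun v hv p1 p2 => tA hv p1 p2) hKcons
    · exact hVacMem φ hnφ
  have hSSC : L.SingleSentenceClosure {α | α ∈ od α} := by
    intro α hα β hβ
    exact h7 α β hα (cn_singleton_iff.1 hβ)
  have hDisjoint : {α : L.Sentence | α ∈ od α} ∩ {α | α ∉ od α ∧ L.neg α ∉ od α} = ∅ := by
    apply Set.eq_empty_iff_forall_notMem.2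
    rintro α ⟨hmem, hmem2⟩
    exact hmem2.1 hmem
  have hCond1 : L.CondCStar K star
      ({α | α ∈ od α} ∪ {α | α ∉ od α ∧ L.neg α ∉ od α}) := by
    intro α β hα hβ
    simp only [Set.mem_union, Set.mem_setOf_eq, not_or, not_and, not_not] at hα
    have hrej : L.neg α ∈ od α := hα.2 hα.1
    rcases hβ with hβ | hβ
    · exact hOdSubStar β (hNotBoth β hβ) (hPersist β α hrej)
    · exact hOdSubStar β hβ.2 (hPersist β α hrej)
  have hCond2 : L.CondCStar K star {α | α ∈ od α} := by
    intro α β hα hβ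
    have hβ' : β ∈ od β := hβ
    exact hOdSubStar β (hNotBoth β hβ') (hCondCH α β hα hβ')
  exact ⟨star, {α | α ∈ od α}, {α | α ∉ od α ∧ L.neg α ∉ od α},
    ⟨star1, star2, star3, star4, star5, star6, star7, star8⟩,
    htwoLevel, hCLequiv, hCLcons, hDisjoint, hCHcons, hLB, hSSC, hCond1, hCond2⟩
end

section
/- Let K be a consistent belief set, let ⋆ be an AGM revision on K, and let C_H, C_L ⊆ L be sets such that: C_L satisfies credibility of logical equivalents and element consistency; C_H ∩ C_L = ∅; C_H satisfies element consistency, credibility lower bounding and single sentence closure; and conditions ((C_H ∪ C_L) - ⋆) and (C_H - ⋆) hold. Then the two level CL revision operator ⊙ induced by ⋆, C_H and C_L satisfies, for all sentences α, β: weak relative success (α ∈ K⊙α or K⊙α ⊆ K), closure (K⊙α = Cn(K⊙α)), inclusion (K⊙α ⊆ K + α), consistency preservation (if K is consistent then K⊙α is consistent), vacuity (if ¬α ∉ K then K + α ⊆ K⊙α), extensionality (if ⊢ α ↔ β then K⊙α = K⊙β), strict improvement (if α ∈ K⊙α and ⊢ α → β then β ∈ K⊙β), N-persistence (if ¬β ∈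 K⊙β then ¬β ∈ K⊙α for all α), N-recovery (K ⊆ (K⊙α) + ¬α), disjunctive overlap (K⊙α ∩ K⊙β ⊆ K⊙(α ∨ β)) and disjunctive inclusion (if ¬α ∉ K⊙(α ∨ β) then K⊙(α ∨ β) ⊆ K⊙α). -/
namespace PropLanguage

variable (L : PropLanguage)

/-! ### Auxiliary lemmas -/

variable {L : PropLanguage}

lemma cnCut {A B : Set L.Sentence} (h : B ⊆ L.Cn A) : L.Cn B ⊆ L.Cn A := by
  have := L.cn_monotony B (L.Cn A) h
  rwa [L.cn_iteration] at this

lemma memClosed {X A : Set L.Sentence} (hX : X = L.Cn X) (hsub : A ⊆ X)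
    {γ : L.Sentence} (hγ : γ ∈ L.Cn A) : γ ∈ X := by
  rw [hX]
  exact cnCut (fun x hx => L.cn_inclusion X (hsub hx)) hγ

lemma sem1 (α γ : L.Sentence)
    (h : ∀ v : L.Sentence → Bool, v L.falsum = false → (∀ β, v (L.neg β) = !v β) →
      (∀ β δ, v (L.conj β δ) = (v β && v δ)) → (∀ β δ, v (L.disj β δ) = (v β || v δ)) →
      (∀ β δ, v (L.impl β δ) = (!v β || v δ)) → (∀ β δ, v (L.biimpl β δ) = (v β == v δ)) →
      v α = true → v γ = true) : γ ∈ L.Cn {α} :=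
  L.cn_supraclassical _ _ (fun v h0 h1 h2 h3 h4 h5 hA =>
    h v h0 h1 h2 h3 h4 h5 (hA α (Set.mem_singleton α)))

lemma sem2 (α₁ α₂ γ : L.Sentence)
    (h : ∀ v : L.Sentence → Bool, v L.falsum = false → (∀ β, v (L.neg β) = !v β) →
      (∀ β δ, v (L.conj β δ) = (v β && v δ)) → (∀ β δ, v (L.disj β δ) = (v β || v δ)) →
      (∀ β δ, v (L.impl β δ) = (!v β || v δ)) → (∀ β δ, v (L.biimpl β δ) = (v β == v δ)) →
      v α₁ = true → v α₂ = true → v γ = true) : γ ∈ L.Cn {α₁, α₂} :=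
  L.cn_supraclassical _ _ (fun v h0 h1 h2 h3 h4 h5 hA =>
    h v h0 h1 h2 h3 h4 h5 (hA α₁ (by simp)) (hA α₂ (by simp)))

lemma sem0 (γ : L.Sentence)
    (h : ∀ v : L.Sentence → Bool, v L.falsum = false → (∀ β, v (L.neg β) = !v β) →
      (∀ β δ, v (L.conj β δ) = (v β && v δ)) → (∀ β δ, v (L.disj β δ) = (v β || v δ)) →
      (∀ β δ, v (L.impl β δ) = (!v β || v δ)) → (∀ β δ, v (L.biimpl β δ) = (v β == v δ)) →
      v γ = true) : γ ∈ L.Cn (∅ : Set L.Sentence) :=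
  L.cn_supraclassical _ _ (fun v h0 h1 h2 h3 h4 h5 _ => h v h0 h1 h2 h3 h4 h5)

lemma entail_mp {α β : L.Sentence} (h : L.impl α β ∈ L.Cn ∅) : β ∈ L.Cn {α} := by
  have := (L.cn_deduction ∅ α β).mpr h
  rwa [Set.empty_union] at this

lemma taut_impl_of_biimpl {α β : L.Sentence} (h : L.biimpl α β ∈ L.Cn ∅) :
    L.impl α β ∈ L.Cn (∅ : Set L.Sentence) := by
  have h1 : L.impl α β ∈ L.Cn {L.biimpl α β} := by
    apply sem1; intro v h0 h1 h2 h3 h4 h5 hb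
    rw [h5] at hb; rw [h4]
    cases hα : v α <;> cases hβ : v β <;> simp_all
  exact cnCut (by simpa using h) h1

lemma taut_biimpl_symm {α β : L.Sentence} (h : L.biimpl α β ∈ L.Cn ∅) :
    L.biimpl β α ∈ L.Cn (∅ : Set L.Sentence) := by
  have h1 : L.biimpl β α ∈ L.Cn {L.biimpl α β} := by
    apply sem1; intro v h0 h1 h2 h3 h4 h5 hb
    rw [h5] at hb; rw [h5]
    cases hα : v α <;> cases hβ : v β <;> simp_all
  exact cnCut (by simpa using h) h1

lemma disj_inl (α β : L.Sentence) : L.disj α β ∈ L.Cn {α} := by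
  apply sem1; intro v h0 h1 h2 h3 h4 h5 ha; rw [h3, ha]; simp

lemma disj_inr (α β : L.Sentence) : L.disj α β ∈ L.Cn {β} := by
  apply sem1; intro v h0 h1 h2 h3 h4 h5 hb; rw [h3, hb]; simp

lemma alpha_of_disj_negb (α β : L.Sentence) : α ∈ L.Cn {L.disj α β, L.neg β} := by
  apply sem2; intro v h0 h1 h2 h3 h4 h5 hd hn
  rw [h3] at hd; rw [h1] at hn
  cases hα : v α <;> simp_all

lemma beta_of_disj_nega (α β : L.Sentence) : β ∈ L.Cn {L.disj α β, L.neg α} := by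
  apply sem2; intro v h0 h1 h2 h3 h4 h5 hd hn
  rw [h3] at hd; rw [h1] at hn
  cases hβ : v β <;> simp_all

lemma falsum_of_pair (α : L.Sentence) : L.falsum ∈ L.Cn {α, L.neg α} := by
  apply sem2; intro v h0 h1 h2 h3 h4 h5 ha hn
  rw [h1] at hn; simp_all

lemma taut_nf : L.neg L.falsum ∈ L.Cn (∅ : Set L.Sentence) := by
  apply sem0; intro v h0 h1 h2 h3 h4 h5; rw [h1, h0]; simp

lemma impl_neg_in (α δ : L.Sentence) : L.impl (L.neg α) δ ∈ L.Cn {α} := by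
  apply sem1; intro v h0 h1 h2 h3 h4 h5 ha; rw [h4, h1, ha]; simp

lemma impl_neg_in' (α δ : L.Sentence) : L.impl (L.neg α) δ ∈ L.Cn {δ} := by
  apply sem1; intro v h0 h1 h2 h3 h4 h5 hd; rw [h4, hd]; simp

lemma impl_of_concl (ε γ : L.Sentence) : L.impl ε γ ∈ L.Cn {γ} := by
  apply sem1; intro v h0 h1 h2 h3 h4 h5 hg; rw [h4, hg]; simp

lemma impl_of_negprem (δ ε γ : L.Sentence) :
    L.impl ε γ ∈ L.Cn {L.conj δ (L.neg ε)} := by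
  apply sem1; intro v h0 h1 h2 h3 h4 h5 hc
  rw [h2, h1] at hc; rw [h4]
  cases hε : v ε <;> simp_all

lemma biimpl_comm_disj (α β : L.Sentence) :
    L.biimpl (L.disj α β) (L.disj β α) ∈ L.Cn (∅ : Set L.Sentence) := by
  apply sem0; intro v h0 h1 h2 h3 h4 h5
  rw [h5, h3, h3]; cases hα : v α <;> cases hβ : v β <;> simp

lemma biimpl_factor (α β : L.Sentence) :
    L.biimpl α (L.conj (L.disj α β) (L.disj α (L.neg β))) ∈ L.Cn (∅ : Set L.Sentence) := by
  apply sem0; intro v h0 h1 h2 h3 h4 h5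
  rw [h5, h2, h3, h3, h1]; cases hα : v α <;> cases hβ : v β <;> simp

lemma biimpl_distrib (δ ε : L.Sentence) :
    L.biimpl (L.disj (L.conj δ ε) (L.conj δ (L.neg ε))) δ ∈ L.Cn (∅ : Set L.Sentence) := by
  apply sem0; intro v h0 h1 h2 h3 h4 h5
  rw [h5, h3, h2, h2, h1]; cases hδ : v δ <;> cases hε : v ε <;> simp

lemma mp_closed {X : Set L.Sentence} (hX : X = L.Cn X) {α β : L.Sentence}
    (h1 : L.impl α β ∈ X) (h2 : α ∈ X) : β ∈ X := by
  apply memClosed hX (A := {α, L.impl α β})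
    (by intro x hx
        rcases hx with rfl | hx
        · exact h2
        · rw [Set.mem_singleton_iff] at hx; subst hx; exact h1)
  apply sem2; intro v h0 hn hc hd hi hb ha hi2
  rw [hi, ha] at hi2; simpa using hi2

lemma inconsistent_pair {X : Set L.Sentence} (hcons : L.Consistent X) (hX : X = L.Cn X)
    {α : L.Sentence} (h1 : α ∈ X) (h2 : L.neg α ∈ X) : False := by
  apply hcons
  rw [← hX]
  exact memClosed hX
    (by intro x hx
        rcases hx with rfl | hx
        · exact h1
        · rw [Set.mem_singleton_iff] at hx; subst hx; exact h2) (falsum_of_pair α)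


lemma L7conj {K : Set L.Sentence} {star : L.Sentence → Set L.Sentence}
    (hstar : L.IsAGMRevision K star) {δ ε γ : L.Sentence}
    (h : γ ∈ star (L.conj δ ε)) : L.impl ε γ ∈ star δ := by
  obtain ⟨s1, s2, s3, s4, s5, s6, s7, s8⟩ := hstar
  have h1 : L.impl ε γ ∈ star (L.conj δ ε) :=
    memClosed (s1 _) (Set.singleton_subset_iff.mpr h) (impl_of_concl ε γ)
  have h2 : L.impl ε γ ∈ star (L.conj δ (L.neg ε)) :=
    memClosed (s1 _) (Set.singleton_subset_iff.mpr (s2 _)) (impl_of_negprem δ ε γ)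
  have h3 := s7 _ _ ⟨h1, h2⟩
  rwa [s6 _ _ (biimpl_distrib δ ε)] at h3

lemma Lsub {K : Set L.Sentence} {star : L.Sentence → Set L.Sentence}
    (hstar : L.IsAGMRevision K star) {α β : L.Sentence}
    (h : α ∈ star (L.disj α β)) : star α ⊆ star (L.disj α β) := by
  have s1 := hstar.1
  have s6 := hstar.2.2.2.2.2.1
  intro γ hγ
  have he : star α = star (L.conj (L.disj α β) (L.disj α (L.neg β))) :=
    s6 _ _ (biimpl_factor α β)
  rw [he] at hγ
  have h7 : L.impl (L.disj α (L.neg β)) γ ∈ star (L.disj α β) := L7conj hstar hγ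
  have hε : L.disj α (L.neg β) ∈ star (L.disj α β) :=
    memClosed (s1 _) (Set.singleton_subset_iff.mpr h) (disj_inl α (L.neg β))
  exact mp_closed (s1 _) h7 hε
end PropLanguage

open PropLanguage in
/-- the two level CL revision operator induced by an AGM revision
`⋆` and sets `C_H`, `C_L` with the stated properties (including conditions
`((C_H ∪ C_L) - ⋆)` and `(C_H - ⋆)`) satisfies the eleven listed postulates. -/
theorem twoLevelCL_AGM_satisfies_postulates
    (L : PropLanguage) (K : Set L.Sentence)
    (hK : L.IsBeliefSet K) (hKcons : L.Consistent K)
    (star : L.Sentence → Set L.Sentence) (CH CL : Set L.Sentence)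
    (hstar : L.IsAGMRevision K star)
    (hCLeq : L.CredLogEquiv CL) (hCLcons : L.ElementConsistency CL)
    (hdisj : CH ∩ CL = ∅)
    (hCHcons : L.ElementConsistency CH) (hCHlb : L.CredLowerBound K CH)
    (hCHclos : L.SingleSentenceClosure CH)
    (hcond1 : L.CondCStar K star (CH ∪ CL)) (hcond2 : L.CondCStar K star CH)
    (od : L.Sentence → Set L.Sentence)
    (hod : L.IsTwoLevelCL K od star CH CL) :
    L.WeakRelativeSuccess K od ∧ L.Closure od ∧ L.Inclusion K od ∧
    L.ConsistencyPreservation K od ∧ L.Vacuity K od ∧ L.Extensionality od ∧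
    L.StrictImprovement od ∧ L.NPersistence od ∧ L.NRecovery K od ∧
    L.DisjunctiveOverlap od ∧ L.DisjunctiveInclusion od := by
  have hstar' := hstar
  obtain ⟨s1, s2, s3, s4, s5, s6, s7, s8⟩ := hstar'
  have odCH : ∀ α, α ∈ CH → od α = star α := fun α h => ((hod α).1) h
  have odCL : ∀ α, α ∈ CL → od α = star α ∩ K := fun α h => ((hod α).2.1) h
  have odN : ∀ α, α ∉ CH ∪ CL → od α = K := fun α h => ((hod α).2.2) h
  have hdisj' : ∀ α, α ∈ CH → α ∈ CL → False := by
    intro α h1 h2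
    have : α ∈ CH ∩ CL := ⟨h1, h2⟩
    rw [hdisj] at this
    exact this
  have factB : ∀ α, α ∉ CH → L.neg α ∈ K := by
    intro α hα
    have ht : L.neg L.falsum ∈ K := memClosed hK (Set.empty_subset K) taut_nf
    have htCH : L.neg L.falsum ∈ CH := hCHlb hKcons ht
    have h1 : L.neg α ∈ star (L.neg L.falsum) := hcond2 α _ hα htCH
    have h2 : star (L.neg L.falsum) ⊆ K := by
      refine (s3 _).trans ?_
      intro x hx
      exact memClosed hK
        (Set.union_subset (subset_refl K) (Set.singleton_subset_iff.mpr ht)) hx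
    exact h2 h1
  have factC : ∀ α β, α ∈ CH → L.disj α β ∈ CH := fun α β h => hCHclos α h (disj_inl α β)
  have consStar : ∀ γ, γ ∈ CH ∪ CL → L.Consistent (star γ) := by
    intro γ h
    rcases h with h | h
    · exact s5 γ (hCHcons γ h)
    · exact s5 γ (hCLcons γ h)
  have odsubK : ∀ α, α ∉ CH → od α ⊆ K := by
    intro α hα
    by_cases h : α ∈ CL
    · rw [odCL α h]; exact Set.inter_subset_right
    · rw [odN α (fun hc => hc.elim hα h)]
  have odsubStar : ∀ α, α ∈ CH ∪ CL → od α ⊆ star α := by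
    intro α hα
    rcases hα with h | h
    · rw [odCH α h]
    · rw [odCL α h]; exact Set.inter_subset_left
  have memCH_of_od : ∀ α, α ∈ od α → α ∈ CH := by
    intro α h
    by_cases h1 : α ∈ CH
    · exact h1
    exfalso
    have hnα : L.neg α ∈ K := factB α h1
    by_cases h2 : α ∈ CL
    · rw [odCL α h2] at h
      exact inconsistent_pair hKcons hK h.2 hnα
    · rw [odN α (fun hc => hc.elim h1 h2)] at h
      exact h1 (hCHlb hKcons h)
  refine ⟨?_, ?_, ?_, ?_, ?_, ?_, ?_, ?_, ?_, ?_, ?_⟩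
  -- Weak relative success
  · intro α
    by_cases h : α ∈ CH
    · left; rw [odCH α h]; exact s2 α
    · right; exact odsubK α h
  -- Closure
  · intro α
    by_cases h : α ∈ CH
    · rw [odCH α h]; exact s1 α
    by_cases h2 : α ∈ CL
    · rw [odCL α h2]
      apply Set.Subset.antisymm (L.cn_inclusion _)
      intro x hx
      exact ⟨memClosed (s1 α) Set.inter_subset_left hx,
             memClosed hK Set.inter_subset_right hx⟩
    · rw [odN α (fun hc => hc.elim h h2)]; exact hK
  -- Inclusion
  · intro α
    by_cases h : α ∈ CH
    · rw [odCH α h]; exact s3 α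
    by_cases h2 : α ∈ CL
    · rw [odCL α h2]; exact Set.inter_subset_left.trans (s3 α)
    · rw [odN α (fun hc => hc.elim h h2)]
      exact Set.subset_union_left.trans (L.cn_inclusion _)
  -- Consistency preservation
  · intro _ α
    by_cases h : α ∈ CH
    · rw [odCH α h]; exact s5 α (hCHcons α h)
    by_cases h2 : α ∈ CL
    · rw [odCL α h2]
      intro hf
      apply hKcons
      rw [← hK]
      exact memClosed hK Set.inter_subset_right hf
    · rw [odN α (fun hc => hc.elim h h2)]; exact hKcons
  -- Vacuity
  · intro α hna
    have hCHα : α ∈ CH := by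
      by_contra h
      exact hna (factB α h)
    rw [odCH α hCHα]
    exact s4 α hna
  -- Extensionality
  · intro α β hbi
    have hab : β ∈ L.Cn {α} := entail_mp (taut_impl_of_biimpl hbi)
    have hba : α ∈ L.Cn {β} := entail_mp (taut_impl_of_biimpl (taut_biimpl_symm hbi))
    have hCHiff : (α ∈ CH) ↔ (β ∈ CH) :=
      ⟨fun h => hCHclos α h hab, fun h => hCHclos β h hba⟩
    have hCLiff : (α ∈ CL) ↔ (β ∈ CL) := hCLeq α β hbi
    by_cases h : α ∈ CH
    · rw [odCH α h, odCH β (hCHiff.mp h), s6 α β hbi]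
    by_cases h2 : α ∈ CL
    · rw [odCL α h2, odCL β (hCLiff.mp h2), s6 α β hbi]
    · rw [odN α (fun hc => hc.elim h h2),
         odN β (fun hc => hc.elim (fun h' => h (hCHiff.mpr h'))
           (fun h' => h2 (hCLiff.mpr h')))]
  -- Strict improvement
  · intro α β hα hib
    have h1 : α ∈ CH := memCH_of_od α hα
    have h3 : β ∈ CH := hCHclos α h1 (entail_mp hib)
    rw [odCH β h3]
    exact s2 β
  -- N-persistence
  · intro α β h
    by_cases hb : β ∈ CH ∪ CL
    · exact absurd (odsubStar β hb h)
        (fun h' => inconsistent_pair (consStar β hb) (s1 β) (s2 β) h')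
    · have hbK : L.neg β ∈ K := factB β (fun h' => hb (Or.inl h'))
      by_cases ha : α ∈ CH
      · rw [odCH α ha]; exact hcond1 β α hb (Or.inl ha)
      by_cases ha2 : α ∈ CL
      · rw [odCL α ha2]; exact ⟨hcond1 β α hb (Or.inr ha2), hbK⟩
      · rw [odN α (fun hc => hc.elim ha ha2)]; exact hbK
  -- N-recovery
  · intro α x hx
    by_cases h : α ∈ CH
    · rw [odCH α h]
      show x ∈ L.Cn (star α ∪ {L.neg α})
      rw [L.cn_deduction]
      rw [← s1 α]
      exact memClosed (s1 α) (Set.singleton_subset_iff.mpr (s2 α)) (impl_neg_in α x)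
    by_cases h2 : α ∈ CL
    · rw [odCL α h2]
      show x ∈ L.Cn ((star α ∩ K) ∪ {L.neg α})
      rw [L.cn_deduction]
      apply L.cn_inclusion
      exact ⟨memClosed (s1 α) (Set.singleton_subset_iff.mpr (s2 α)) (impl_neg_in α x),
             memClosed hK (Set.singleton_subset_iff.mpr hx) (impl_neg_in' α x)⟩
    · rw [odN α (fun hc => hc.elim h h2)]
      exact L.cn_inclusion _ (Set.mem_union_left _ hx)
  -- Disjunctive overlap
  · intro α β x hx
    obtain ⟨hxa, hxb⟩ := hx
    by_cases hγ : L.disj α β ∈ CH ∪ CL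
    · have hstarpart : x ∈ star (L.disj α β) := by
        by_cases ha : α ∈ CH ∪ CL
        · by_cases hb : β ∈ CH ∪ CL
          · exact s7 α β ⟨odsubStar α ha hxa, odsubStar β hb hxb⟩
          · have hnb : L.neg β ∈ star (L.disj α β) := hcond1 β _ hb hγ
            have hαin : α ∈ star (L.disj α β) :=
              memClosed (s1 _) (Set.pair_subset (s2 _) hnb) (alpha_of_disj_negb α β)
            exact Lsub hstar hαin (odsubStar α ha hxa)
        · have hna : L.neg α ∈ star (L.disj α β) := hcond1 α _ ha hγ
          have hβin : β ∈ star (L.disj α β) :=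
            memClosed (s1 _) (Set.pair_subset (s2 _) hna) (beta_of_disj_nega α β)
          by_cases hb : β ∈ CH ∪ CL
          · have hc : star (L.disj β α) = star (L.disj α β) :=
              s6 _ _ (biimpl_comm_disj β α)
            have hsub := Lsub hstar (show β ∈ star (L.disj β α) by rw [hc]; exact hβin)
            rw [hc] at hsub
            exact hsub (odsubStar β hb hxb)
          · have hnb : L.neg β ∈ star (L.disj α β) := hcond1 β _ hb hγ
            exact absurd hβin
              (fun h' => inconsistent_pair (consStar _ hγ) (s1 _) h' hnb)
      rcases hγ with hγH | hγL
      · rw [odCH _ hγH]; exact hstarpart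
      · rw [odCL _ hγL]
        refine ⟨hstarpart, ?_⟩
        exact odsubK α (fun h' => hdisj' _ (factC α β h') hγL) hxa
    · rw [odN _ hγ]
      exact odsubK α (fun h' => hγ (Or.inl (factC α β h'))) hxa
  -- Disjunctive inclusion
  · intro α β h
    by_cases hγH : L.disj α β ∈ CH
    · have haH : α ∈ CH := by
        by_contra h'
        exact h (by rw [odCH _ hγH]; exact hcond2 α _ h' hγH)
      have hnas : L.neg α ∉ star (L.disj α β) := by
        intro hmem
        exact h (by rw [odCH _ hγH]; exact hmem)
      rw [odCH _ hγH, odCH α haH]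
      exact s8 α β hnas
    by_cases hγL : L.disj α β ∈ CL
    · have haH : α ∉ CH := fun h' => hdisj' _ (factC α β h') hγL
      have hnaK : L.neg α ∈ K := factB α haH
      have hnas : L.neg α ∉ star (L.disj α β) := by
        intro h'
        exact h (by rw [odCL _ hγL]; exact ⟨h', hnaK⟩)
      have hsub := s8 α β hnas
      by_cases haL : α ∈ CL
      · rw [odCL _ hγL, odCL α haL]
        exact fun y hy => ⟨hsub hy.1, hy.2⟩
      · rw [odCL _ hγL, odN α (fun hc => hc.elim haH haL)]
        exact Set.inter_subset_right
    · exfalso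
      apply h
      rw [odN _ (fun hc => hc.elim hγH hγL)]
      exact factB α (fun h' => hγH (factC α β h'))
end

section
/- Let K be a consistent belief set and let ⊙ be an operator on K. If ⊙ satisfies, for all sentences α: closure (K⊙α = Cn(K⊙α)), consistency preservation (if K is consistent then K⊙α is consistent), weak relative success (α ∈ K⊙α or K⊙α ⊆ K) and N-recovery (K ⊆ (K⊙α) + ¬α), then ⊙ satisfies N-relative success: for all α, if ¬α ∈ K⊙α then K⊙α = K. -/
open PropLanguage in
/-- closure, consistency preservation, weak relative success and
N-recovery imply N-relative success. -/
theorem nRelativeSuccess_of_postulates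
    (L : PropLanguage) (K : Set L.Sentence)
    (hK : L.IsBeliefSet K) (hKcons : L.Consistent K)
    (od : L.Sentence → Set L.Sentence)
    (hclo : L.Closure od) (hcp : L.ConsistencyPreservation K od)
    (hwrs : L.WeakRelativeSuccess K od) (hnr : L.NRecovery K od) :
    ∀ α, L.neg α ∈ od α → od α = K := by
  intro α hna
  have hcons := hcp hKcons α
  -- α ∉ od α, else inconsistent
  have hα : α ∉ od α := by
    intro hα
    apply hcons
    apply L.cn_supraclassical
    intro v hf hn hc hd hi hb hall
    have h1 := hall α hα
    have h2 := hall (L.neg α) hna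
    rw [hn α, h1] at h2
    simp at h2
  have hsub : od α ⊆ K := (hwrs α).resolve_left hα
  have hsub2 : K ⊆ od α := by
    intro φ hφ
    have h1 : φ ∈ L.expand (od α) (L.neg α) := hnr α hφ
    have h2 : od α ∪ {L.neg α} ⊆ od α := by
      intro x hx; rcases hx with hx | hx
      · exact hx
      · rw [Set.mem_singleton_iff] at hx; rw [hx]; exact hna
    have h3 : L.Cn (od α ∪ {L.neg α}) ⊆ L.Cn (od α) := L.cn_monotony _ _ h2
    have h4 := h3 h1
    rwa [← hclo α] at h4
  exact Set.Subset.antisymm hsub hsub2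
end

section
/- Let K be a consistent belief set and let ⊙ be an operator on K. If ⊙ satisfies, for all sentences α, β: consistency preservation (if K is consistent then K⊙α is consistent), closure (K⊙α = Cn(K⊙α)), vacuity (if ¬α ∉ K then K + α ⊆ K⊙α), inclusion (K⊙α ⊆ K + α), strict improvement (if α ∈ K⊙α and ⊢ α → β then β ∈ K⊙β), disjunctive inclusion (if ¬α ∉ K⊙(α ∨ β) then K⊙(α ∨ β) ⊆ K⊙α), disjunctive overlap (K⊙α ∩ K⊙β ⊆ K⊙(α ∨ β)) and N-recovery (K ⊆ (K⊙α) + ¬α), then ⊙ satisfies regularity: for all α, β, if β ∈ K⊙α then β ∈ K⊙β. -/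
open PropLanguage in
/-- consistency preservation, closure, vacuity, inclusion, strict
improvement, disjunctive inclusion, disjunctive overlap and N-recovery imply
regularity. -/
theorem regularity_of_postulates
    (L : PropLanguage) (K : Set L.Sentence)
    (hK : L.IsBeliefSet K) (hKcons : L.Consistent K)
    (od : L.Sentence → Set L.Sentence)
    (hcp : L.ConsistencyPreservation K od) (hclo : L.Closure od)
    (hvac : L.Vacuity K od) (hinc : L.Inclusion K od)
    (hsi : L.StrictImprovement od) (hdi : L.DisjunctiveInclusion od)
    (hdo : L.DisjunctiveOverlap od) (hnr : L.NRecovery K od) :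
    ∀ α β, β ∈ od α → β ∈ od β := by
  intro α β hβ
  by_cases hnB : L.neg β ∈ K
  · -- case ¬β ∈ K : first show ¬α ∈ K
    have hnA : L.neg α ∈ K := by
      by_contra hnA
      have h1 : L.neg β ∈ od α :=
        hvac α hnA (L.cn_inclusion _ (Set.mem_union_left _ hnB))
      have hbot : L.falsum ∈ L.Cn (od α) := by
        apply L.cn_supraclassical
        intro v hf hn hc hd hi hb hA
        have h2 := hA _ hβ
        have h3 := hA _ h1
        rw [hn, h2] at h3
        simp at h3
      exact hcp hKcons α hbot
    -- ¬α → ¬β ∈ od α  (from N-recovery)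
    have hd1 : L.impl (L.neg α) (L.neg β) ∈ od α := by
      have h := (L.cn_deduction (od α) (L.neg α) (L.neg β)).mp (hnr α hnB)
      rw [hclo α]; exact h
    -- α ∈ od α
    have hAA : α ∈ od α := by
      rw [hclo α]
      apply L.cn_supraclassical
      intro v hf hn hc hd hi hb hA
      have h2 := hA _ hβ
      have h3 := hA _ hd1
      rw [hi, hn, hn, h2] at h3
      cases hva : v α
      · rw [hva] at h3; simp at h3
      · rfl
    -- β ∨ α ∈ od (β ∨ α)  (strict improvement)
    have hBA : L.disj β α ∈ od (L.disj β α) := by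
      apply hsi α (L.disj β α) hAA
      apply L.cn_supraclassical
      intro v hf hn hc hd hi hb hA
      rw [hi, hd]
      cases v α <;> simp
    -- α → β ∈ od β  (from N-recovery at β, since ¬α ∈ K)
    have h5 : L.impl α β ∈ od β := by
      have h6 := (L.cn_deduction (od β) (L.neg β) (L.neg α)).mp (hnr β hnA)
      rw [← hclo β] at h6
      rw [hclo β]
      apply L.cn_supraclassical
      intro v hf hn hc hd hi hb hA
      have h7 := hA _ h6
      rw [hi, hn, hn] at h7
      rw [hi]
      cases hvb : v β
      · rw [hvb] at h7; simp at h7; simp [h7]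
      · simp
    -- α → β ∈ od α  (weakening from β ∈ od α)
    have h7 : L.impl α β ∈ od α := by
      rw [hclo α]
      apply L.cn_supraclassical
      intro v hf hn hc hd hi hb hA
      have h2 := hA _ hβ
      rw [hi, h2]
      simp
    -- overlap: α → β ∈ od (β ∨ α)
    have h8 : L.impl α β ∈ od (L.disj β α) := hdo β α ⟨h5, h7⟩
    -- β ∈ od (β ∨ α)
    have h9 : β ∈ od (L.disj β α) := by
      rw [hclo (L.disj β α)]
      apply L.cn_supraclassical
      intro v hf hn hc hd hi hb hA
      have h2 := hA _ hBA
      have h3 := hA _ h8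
      rw [hd] at h2
      rw [hi] at h3
      cases hvb : v β
      · rw [hvb] at h2 h3; simp at h2 h3; rw [h2] at h3; simp at h3
      · rfl
    -- ¬β ∉ od (β ∨ α)
    have h10 : L.neg β ∉ od (L.disj β α) := by
      intro hcon
      have hbot : L.falsum ∈ L.Cn (od (L.disj β α)) := by
        apply L.cn_supraclassical
        intro v hf hn hc hd hi hb hA
        have h2 := hA _ h9
        have h3 := hA _ hcon
        rw [hn, h2] at h3
        simp at h3
      exact hcp hKcons (L.disj β α) hbot
    exact hdi β α h10 h9
  · -- case ¬β ∉ K : vacuity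
    exact hvac β hnB (L.cn_inclusion _ (Set.mem_union_right _ rfl))
end

section
/- Let K be a consistent belief set and let ⊙ be an operator on K. If ⊙ satisfies, for all sentences α: N-recovery (K ⊆ (K⊙α) + ¬α) and closure (K⊙α = Cn(K⊙α)), then ⊙ satisfies containment: for all α, if K is consistent then K ∩ ((K⊙α) + α) ⊆ K⊙α. -/
open PropLanguage in
/-- N-recovery and closure imply containment. -/
theorem containment_of_postulates
    (L : PropLanguage) (K : Set L.Sentence)
    (hK : L.IsBeliefSet K) (hKcons : L.Consistent K)
    (od : L.Sentence → Set L.Sentence)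
    (hnr : L.NRecovery K od) (hclo : L.Closure od) :
    ∀ α, L.Consistent K → K ∩ L.expand (od α) α ⊆ od α := by
  intro α _ φ ⟨hφK, hφexp⟩
  have hcl := hclo α
  have h1 : φ ∈ L.Cn (od α ∪ {L.neg α}) := hnr α hφK
  have h2 : L.impl (L.neg α) φ ∈ od α := by
    rw [hcl]; exact (L.cn_deduction _ _ _).1 h1
  have h3 : L.impl α φ ∈ od α := by
    rw [hcl]; exact (L.cn_deduction _ _ _).1 hφexp
  rw [hcl]
  apply L.cn_supraclassical
  intro v hf hn hc hd hi hb hall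
  have e2 := hall _ h2
  have e3 := hall _ h3
  rw [hi] at e2 e3
  rw [hn] at e2
  cases hva : v α <;> simp [hva] at e2 e3 <;> assumption
end
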